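/- arXiv:1403.0776 — 5 statements merged into one kernel-verified Lean document; each statement's English description precedes it below -/
import Mathlib

section
/- There exists α'₀ > 0 such that for every α' ∈ (0, α'₀] there exists n₀ ∈ ℕ with the following property: if H is a balanced tripartite graph on n = 3m ≥ n₀ vertices with parts A₁, A₂, A₃ such that δ(A_i, A_j) ≥ (1 − α')m for all i ≠ j, then the vertex set of H can be partitioned into m pairwise vertex-disjoint triangles of H. -/
theorem stmt2 :
    ∃ α'₀ : ℝ, 0 < α'₀ ∧ ∀ α' : ℝ, 0 < α' → α' ≤ α'₀ →
    ∃ n₀ : ℕ, ∀ (V : Type) [Fintype V] [DecidableEq V] (H : SimpleGraph V)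
      [DecidableRel H.Adj] (m : ℕ) (A : Fin 3 → Finset V),
      Fintype.card V = 3 * m →
      n₀ ≤ 3 * m →
      (∀ i, (A i).card = m) →
      (∀ i j, i ≠ j → Disjoint (A i) (A j)) →
      A 0 ∪ A 1 ∪ A 2 = Finset.univ →
      (∀ i, ∀ u ∈ A i, ∀ v ∈ A i, ¬ H.Adj u v) →
      (∀ i j, i ≠ j → ∀ v ∈ A i, (1 - α') * m ≤ (((A j).filter (H.Adj v)).card : ℝ)) →
      ∃ P : Finset (Finset V), P.card = m ∧
        (∀ T ∈ P, T.card = 3 ∧ ∀ u ∈ T, ∀ v ∈ T, u ≠ v → H.Adj u v) ∧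
        (P : Set (Finset V)).PairwiseDisjoint id ∧
        P.sup id = Finset.univ := by
  refine ⟨1/4, by norm_num, fun α' hα0 hα4 => ⟨3, ?_⟩⟩
  intro V _ _ H _ m A hcard hn hA hdisj hunion hind hdeg
  classical
  have hm0 : (0:ℝ) ≤ (m:ℝ) := by positivity
  -- bound on non-neighbors
  have nonadj : ∀ i j : Fin 3, i ≠ j → ∀ v ∈ A i,
      (((A j).filter (fun w => ¬ H.Adj v w)).card : ℝ) ≤ α' * m := by
    intro i j hij v hv
    have h1 := hdeg i j hij v hv
    have h2 : ((A j).filter (H.Adj v)).card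
        + ((A j).filter (fun w => ¬ H.Adj v w)).card = (A j).card :=
      Finset.card_filter_add_card_filter_not _
    have h3 := hA j
    have h2' : (((A j).filter (H.Adj v)).card : ℝ)
        + (((A j).filter (fun w => ¬ H.Adj v w)).card : ℝ) = (m : ℝ) := by
      exact_mod_cast h3 ▸ congrArg (Nat.cast (R := ℝ)) h2
    linarith
  have hnein : ∀ i j : Fin 3, i ≠ j → ∀ x ∈ A i, x ∉ A j := by
    intro i j hij x hx hx'
    exact Finset.disjoint_left.1 (hdisj i j hij) hx hx'
  have hcard0 : Fintype.card ↥(A 0) = m := by rw [Fintype.card_coe, hA 0]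
  have hsle : ∀ s : Finset ↥(A 0), (s.card : ℝ) ≤ (m : ℝ) := by
    intro s
    have := s.card_le_univ
    rw [hcard0] at this
    exact_mod_cast this
  -- Step 1 : matching A0 → A1
  set t1 : ↥(A 0) → Finset V := fun u => (A 1).filter (H.Adj u.1) with ht1
  have hall1 : ∀ s : Finset ↥(A 0), s.card ≤ (s.biUnion t1).card := by
    intro s
    rcases s.eq_empty_or_nonempty with rfl | ⟨u0, hu0⟩
    · simp
    by_cases hcov : ∀ w ∈ A 1, w ∈ s.biUnion t1
    · have hsub : A 1 ⊆ s.biUnion t1 := hcov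
      have := Finset.card_le_card hsub
      rw [hA 1] at this
      have h2 := hsle s
      have : (s.card : ℝ) ≤ ((s.biUnion t1).card : ℝ) := by
        have := (Nat.cast_le (α := ℝ)).2 this
        linarith
      exact_mod_cast this
    · push_neg at hcov
      obtain ⟨w, hwA, hw⟩ := hcov
      have hnadj : ∀ u ∈ s, ¬ H.Adj w u.1 := by
        intro u hu hadj
        exact hw (Finset.mem_biUnion.2 ⟨u, hu, Finset.mem_filter.2 ⟨hwA, hadj.symm⟩⟩)
      have hsmall : (s.card : ℝ) ≤ α' * m := by
        have hinj : s.card ≤ ((A 0).filter (fun x => ¬ H.Adj w x)).card := by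
          apply Finset.card_le_card_of_injOn (fun u => u.1)
          · intro u hu
            exact Finset.mem_filter.2 ⟨u.2, hnadj u hu⟩
          · intro a _ b _ h
            exact Subtype.ext h
        have := nonadj 1 0 (by decide) w hwA
        have hinj' : (s.card : ℝ) ≤ (((A 0).filter (fun x => ¬ H.Adj w x)).card : ℝ) :=
          by exact_mod_cast hinj
        linarith
      have hbig : ((1-α') * m : ℝ) ≤ ((s.biUnion t1).card : ℝ) := by
        have h1 := hdeg 0 1 (by decide) u0.1 u0.2
        have hsub : t1 u0 ⊆ s.biUnion t1 := Finset.subset_biUnion_of_mem t1 hu0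
        have h2 := Finset.card_le_card hsub
        have h2' : ((t1 u0).card : ℝ) ≤ ((s.biUnion t1).card : ℝ) := by exact_mod_cast h2
        simp only [ht1] at h2'
        linarith
      have : (s.card : ℝ) ≤ ((s.biUnion t1).card : ℝ) := by nlinarith
      exact_mod_cast this
  obtain ⟨f1, hf1inj, hf1⟩ := (Finset.all_card_le_biUnion_card_iff_exists_injective t1).1 hall1
  have hf1A : ∀ u, f1 u ∈ A 1 := fun u => (Finset.mem_filter.1 (hf1 u)).1
  have hf1adj : ∀ u, H.Adj u.1 (f1 u) := fun u => (Finset.mem_filter.1 (hf1 u)).2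
  -- Step 2 : find third vertices in A2
  set t2 : ↥(A 0) → Finset V :=
    fun u => (A 2).filter (fun w => H.Adj u.1 w ∧ H.Adj (f1 u) w) with ht2
  have hall2 : ∀ s : Finset ↥(A 0), s.card ≤ (s.biUnion t2).card := by
    intro s
    rcases s.eq_empty_or_nonempty with rfl | ⟨u0, hu0⟩
    · simp
    by_cases hcov : ∀ w ∈ A 2, w ∈ s.biUnion t2
    · have hsub : A 2 ⊆ s.biUnion t2 := hcov
      have := Finset.card_le_card hsub
      rw [hA 2] at this
      have h2 := hsle s
      have : (s.card : ℝ) ≤ ((s.biUnion t2).card : ℝ) := by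
        have := (Nat.cast_le (α := ℝ)).2 this
        linarith
      exact_mod_cast this
    · push_neg at hcov
      obtain ⟨w, hwA, hw⟩ := hcov
      have hnadj : ∀ u ∈ s, ¬ (H.Adj u.1 w ∧ H.Adj (f1 u) w) := by
        intro u hu hadj
        exact hw (Finset.mem_biUnion.2 ⟨u, hu, Finset.mem_filter.2 ⟨hwA, hadj⟩⟩)
      set s1 := s.filter (fun u => ¬ H.Adj u.1 w) with hs1
      set s2 := s.filter (fun u => ¬ H.Adj (f1 u) w) with hs2
      have hssub : s ⊆ s1 ∪ s2 := by
        intro u hu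
        rcases not_and_or.1 (hnadj u hu) with h | h
        · exact Finset.mem_union_left _ (Finset.mem_filter.2 ⟨hu, h⟩)
        · exact Finset.mem_union_right _ (Finset.mem_filter.2 ⟨hu, h⟩)
      have hs1card : (s1.card : ℝ) ≤ α' * m := by
        have hinj : s1.card ≤ ((A 0).filter (fun x => ¬ H.Adj w x)).card := by
          apply Finset.card_le_card_of_injOn (fun u => u.1)
          · intro u hu
            have hu' := Finset.mem_filter.1 hu
            exact Finset.mem_filter.2 ⟨u.2, fun h => hu'.2 h.symm⟩
          · intro a _ b _ h
            exact Subtype.ext h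
        have := nonadj 2 0 (by decide) w hwA
        have hinj' : (s1.card : ℝ) ≤ (((A 0).filter (fun x => ¬ H.Adj w x)).card : ℝ) :=
          by exact_mod_cast hinj
        linarith
      have hs2card : (s2.card : ℝ) ≤ α' * m := by
        have hinj : s2.card ≤ ((A 1).filter (fun x => ¬ H.Adj w x)).card := by
          apply Finset.card_le_card_of_injOn (fun u => f1 u)
          · intro u hu
            have hu' := Finset.mem_filter.1 hu
            exact Finset.mem_filter.2 ⟨hf1A u, fun h => hu'.2 h.symm⟩
          · intro a _ b _ h
            exact hf1inj h
        have := nonadj 2 1 (by decide) w hwA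
        have hinj' : (s2.card : ℝ) ≤ (((A 1).filter (fun x => ¬ H.Adj w x)).card : ℝ) :=
          by exact_mod_cast hinj
        linarith
      have hsmall : (s.card : ℝ) ≤ 2 * α' * m := by
        have h1 := Finset.card_le_card hssub
        have h2 := Finset.card_union_le s1 s2
        have h12 : (s.card : ℝ) ≤ (s1.card : ℝ) + (s2.card : ℝ) := by
          exact_mod_cast le_trans h1 h2
        linarith
      have hbig : ((1 - 2*α') * m : ℝ) ≤ ((s.biUnion t2).card : ℝ) := by
        have hcompl : (A 2).filter (fun x => ¬ (H.Adj u0.1 x ∧ H.Adj (f1 u0) x)) ⊆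
            ((A 2).filter (fun x => ¬ H.Adj u0.1 x)) ∪
            ((A 2).filter (fun x => ¬ H.Adj (f1 u0) x)) := by
          intro x hx
          have hx' := Finset.mem_filter.1 hx
          rcases not_and_or.1 hx'.2 with h | h
          · exact Finset.mem_union_left _ (Finset.mem_filter.2 ⟨hx'.1, h⟩)
          · exact Finset.mem_union_right _ (Finset.mem_filter.2 ⟨hx'.1, h⟩)
        have hc1 := nonadj 0 2 (by decide) u0.1 u0.2
        have hc2 := nonadj 1 2 (by decide) (f1 u0) (hf1A u0)
        have hcc : (((A 2).filter (fun x => ¬ (H.Adj u0.1 x ∧ H.Adj (f1 u0) x))).card : ℝ)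
            ≤ 2 * α' * m := by
          have h1 := Finset.card_le_card hcompl
          have h2 := Finset.card_union_le ((A 2).filter (fun x => ¬ H.Adj u0.1 x))
            ((A 2).filter (fun x => ¬ H.Adj (f1 u0) x))
          have h12 : (((A 2).filter (fun x => ¬ (H.Adj u0.1 x ∧ H.Adj (f1 u0) x))).card : ℝ)
              ≤ (((A 2).filter (fun x => ¬ H.Adj u0.1 x)).card : ℝ)
              + (((A 2).filter (fun x => ¬ H.Adj (f1 u0) x)).card : ℝ) := by
            exact_mod_cast le_trans h1 h2
          linarith
        have hsplit : ((A 2).filter (fun w => H.Adj u0.1 w ∧ H.Adj (f1 u0) w)).card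
            + ((A 2).filter (fun x => ¬ (H.Adj u0.1 x ∧ H.Adj (f1 u0) x))).card
            = (A 2).card := Finset.card_filter_add_card_filter_not _
        have hsplit' : (((A 2).filter (fun w => H.Adj u0.1 w ∧ H.Adj (f1 u0) w)).card : ℝ)
            + (((A 2).filter (fun x => ¬ (H.Adj u0.1 x ∧ H.Adj (f1 u0) x))).card : ℝ)
            = (m : ℝ) := by exact_mod_cast (hA 2) ▸ congrArg (Nat.cast (R := ℝ)) hsplit
        have hsub : t2 u0 ⊆ s.biUnion t2 := Finset.subset_biUnion_of_mem t2 hu0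
        have h2 := Finset.card_le_card hsub
        have h2' : ((t2 u0).card : ℝ) ≤ ((s.biUnion t2).card : ℝ) := by exact_mod_cast h2
        simp only [ht2] at h2'
        linarith
      have : (s.card : ℝ) ≤ ((s.biUnion t2).card : ℝ) := by nlinarith
      exact_mod_cast this
  obtain ⟨f2, hf2inj, hf2⟩ := (Finset.all_card_le_biUnion_card_iff_exists_injective t2).1 hall2
  have hf2A : ∀ u, f2 u ∈ A 2 := fun u => (Finset.mem_filter.1 (hf2 u)).1
  have hf2adj : ∀ u, H.Adj u.1 (f2 u) := fun u => (Finset.mem_filter.1 (hf2 u)).2.1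
  have hf12adj : ∀ u, H.Adj (f1 u) (f2 u) := fun u => (Finset.mem_filter.1 (hf2 u)).2.2
  -- assemble triangles
  set g : ↥(A 0) → Finset V := fun u => {u.1, f1 u, f2 u} with hg
  have hne01 : ∀ u u' : ↥(A 0), u.1 ≠ f1 u' := fun u u' h =>
    hnein 0 1 (by decide) u.1 u.2 (h ▸ hf1A u')
  have hne02 : ∀ u u' : ↥(A 0), u.1 ≠ f2 u' := fun u u' h =>
    hnein 0 2 (by decide) u.1 u.2 (h ▸ hf2A u')
  have hne12 : ∀ u u' : ↥(A 0), f1 u ≠ f2 u' := fun u u' h =>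
    hnein 1 2 (by decide) (f1 u) (hf1A u) (h ▸ hf2A u')
  have ginj : Function.Injective g := by
    intro u u' h
    have hm : u.1 ∈ g u' := h ▸ Finset.mem_insert_self _ _
    simp only [hg, Finset.mem_insert, Finset.mem_singleton] at hm
    rcases hm with h' | h' | h'
    · exact Subtype.ext h'
    · exact absurd h' (hne01 u u')
    · exact absurd h' (hne02 u u')
  have gdisj : ∀ u u' : ↥(A 0), u ≠ u' → Disjoint (g u) (g u') := by
    intro u u' hne
    rw [Finset.disjoint_left]
    intro a ha ha'
    simp only [hg, Finset.mem_insert, Finset.mem_singleton] at ha ha'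
    have h0 : u.1 ≠ u'.1 := fun h => hne (Subtype.ext h)
    rcases ha with rfl | rfl | rfl <;> rcases ha' with h | h | h
    · exact h0 h
    · exact hne01 u u' h
    · exact hne02 u u' h
    · exact hne01 u' u h.symm
    · exact hne (hf1inj h)
    · exact hne12 u u' h
    · exact hne02 u' u h.symm
    · exact hne12 u' u h.symm
    · exact hne (hf2inj h)
  have gcard : ∀ u : ↥(A 0), (g u).card = 3 := by
    intro u
    rw [hg]
    rw [Finset.card_insert_of_notMem (by
      simp only [Finset.mem_insert, Finset.mem_singleton]
      push_neg
      exact ⟨hne01 u u, hne02 u u⟩)]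
    rw [Finset.card_insert_of_notMem (by
      simp only [Finset.mem_singleton]
      exact hne12 u u)]
    rfl
  set P : Finset (Finset V) := Finset.univ.image g with hP
  have hPcard : P.card = m := by
    rw [hP, Finset.card_image_of_injective _ ginj, Finset.card_univ, hcard0]
  have hPdisj : (P : Set (Finset V)).PairwiseDisjoint id := by
    intro x hx y hy hxy
    simp only [hP, Finset.coe_image, Set.mem_image] at hx hy
    obtain ⟨u, -, rfl⟩ := hx
    obtain ⟨u', -, rfl⟩ := hy
    exact gdisj u u' (fun h => hxy (by rw [h]))
  have hPtri : ∀ T ∈ P, T.card = 3 ∧ ∀ u ∈ T, ∀ v ∈ T, u ≠ v → H.Adj u v := by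
    intro T hT
    obtain ⟨u, -, rfl⟩ := Finset.mem_image.1 hT
    refine ⟨gcard u, ?_⟩
    intro x hx y hy hxy
    simp only [hg, Finset.mem_insert, Finset.mem_singleton] at hx hy
    rcases hx with rfl | rfl | rfl <;> rcases hy with rfl | rfl | rfl
    · exact absurd rfl hxy
    · exact hf1adj u
    · exact hf2adj u
    · exact (hf1adj u).symm
    · exact absurd rfl hxy
    · exact hf12adj u
    · exact (hf2adj u).symm
    · exact (hf12adj u).symm
    · exact absurd rfl hxy
  refine ⟨P, hPcard, hPtri, hPdisj, ?_⟩
  have hsup : P.sup id = P.biUnion id := Finset.sup_eq_biUnion P id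
  have hdisjP : ∀ x ∈ P, ∀ y ∈ P, x ≠ y → Disjoint (id x) (id y) := by
    intro x hx y hy hxy
    exact hPdisj (Finset.mem_coe.2 hx) (Finset.mem_coe.2 hy) hxy
  have hbcard : (P.biUnion id).card = 3 * m := by
    rw [Finset.card_biUnion hdisjP]
    have : ∀ T ∈ P, (id T).card = 3 := fun T hT => (hPtri T hT).1
    rw [Finset.sum_congr rfl this, Finset.sum_const, hPcard, smul_eq_mul, Nat.mul_comm]
  rw [hsup]
  apply Finset.eq_univ_of_card
  rw [hbcard, hcard]
end

section
/- There exists α'₀ > 0 such that for every α' ∈ (0, α'₀] there exists n₀ ∈ ℕ with the following property: let H be a balanced tripartite graph on n = 3m ≥ n₀ vertices with parts A₁, A₂, A₃ such that δ(A_i, A_j) ≥ (1 − α')m for all i ≠ j, and let T = {t₁, t₂, …, t_m} be a partition of the vertex set of H into m pairwise vertex-disjoint triangles. Then H contains the square of a Hamiltonian cycle; moreover, H contains a square Hamiltonian path whose first three vertices are the three vertices of t₁ (in some order) and whose last three vertices are the three vertices of t_m (in some order). -/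
/-- `G` contains the square of a Hamiltonian cycle. -/
def HasSquareHamCycle {V : Type*} [Fintype V] (G : SimpleGraph V) : Prop :=
  ∃ f : Fin (Fintype.card V) ≃ V, ∀ i j : Fin (Fintype.card V),
    ((i.val + 1) % Fintype.card V = j.val ∨ (i.val + 2) % Fintype.card V = j.val) →
    G.Adj (f i) (f j)

/-- `l` is a square path in `G`: distinct vertices with `vᵢ ~ vⱼ` whenever
`1 ≤ |i - j| ≤ 2`. -/
def IsSquarePath {V : Type*} (G : SimpleGraph V) (l : List V) : Prop :=
  l.Nodup ∧ ∀ i j : Fin l.length,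
    (i.val + 1 = j.val ∨ i.val + 2 = j.val) → G.Adj (l.get i) (l.get j)

/-!
Every triangle of the factor meets each part in exactly one vertex; write `a i k` for the vertex of
`t k` in `A i`. Call triangles `k` and `l` compatible if `a i k` and `a j l` are adjacent whenever
`i ≠ j`. A vertex misses at most `α' m` vertices of each other part, so a triangle is incompatible
with at most `6 α' m` others, and for `α' ≤ 1/24`, `m ≥ 6` the compatibility graph on the `m`
triangles satisfies Dirac's condition `m + 1 ≤ 2 deg`. By Ore's theorem in its Hamiltonian-connected
form it then has a Hamiltonian path between any two triangles. Listing the triangles along such a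
path, each as `a 0 k, a 1 k, a 2 k`, gives a square path of `H`: entries at distance one or two lie
in the same or in consecutive triangles, and in different parts. A path from `t₁` to `t_m` is the
required square Hamiltonian path; a path from `t₁` to a triangle compatible with `t₁` closes up into
the square of a Hamiltonian cycle.

Ore's theorem is proved by adding missing edges one at a time: a Hamiltonian path through a new
edge `uv` is repaired by a 2-opt move (reversing a segment), which exists by pigeonhole since
`deg u + deg v > n`.
-/

namespace List

variable {α : Type*}

theorem Nodup.length_eq_card [Fintype α] {l : List α} (hnd : l.Nodup) (hmem : ∀ x, x ∈ l) :
    l.length = Fintype.card α := by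
  classical
  simpa using Fintype.card_congr (hnd.getEquivOfForallMemList l hmem)

def reverseSlice (l : List α) (a b : ℕ) : List α :=
  l.take a ++ ((l.take b).drop a).reverse ++ l.drop b

variable {l : List α} {a b : ℕ}

theorem reverseSlice_perm (hab : a ≤ b) : (l.reverseSlice a b).Perm l := by
  calc l.reverseSlice a b ~ (l.take b).take a ++ (l.take b).drop a ++ l.drop b := by
        rw [take_take, min_eq_left hab]
        exact ((perm_append_left_iff _).2 (reverse_perm _)).append_right _
    _ = l := by rw [take_append_drop, take_append_drop]

theorem length_reverseSlice (hab : a ≤ b) : (l.reverseSlice a b).length = l.length :=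
  (reverseSlice_perm hab).length_eq

theorem getElem_reverseSlice_of_notMem {i : ℕ} (hab : a ≤ b) (hb : b ≤ l.length)
    (hi : i < (l.reverseSlice a b).length) (h : i < a ∨ b ≤ i) :
    (l.reverseSlice a b)[i] = l[i]'(length_reverseSlice hab ▸ hi) := by
  rw [length_reverseSlice hab] at hi
  simp only [reverseSlice, getElem_append, getElem_reverse, getElem_take, getElem_drop,
    length_append, length_reverse, length_take, length_drop]
  split_ifs <;> first | rfl | (congr 1; omega)

theorem getElem_reverseSlice_of_mem {i : ℕ} (hab : a ≤ b) (hb : b ≤ l.length)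
    (hi : i < (l.reverseSlice a b).length) (h₁ : a ≤ i) (h₂ : i < b) :
    (l.reverseSlice a b)[i] = l[a + b - 1 - i]'(by omega) := by
  rw [length_reverseSlice hab] at hi
  simp only [reverseSlice, getElem_append, getElem_reverse, getElem_take, getElem_drop,
    length_append, length_reverse, length_take, length_drop]
  split_ifs <;> first | rfl | (congr 1; omega)

theorem head?_reverseSlice (ha : 0 < a) :
    (l.reverseSlice a b).head? = l.head? := by
  cases l <;> simp [reverseSlice, head?_take, ha.ne']

theorem getLast?_reverseSlice (hb : b < l.length) :
    (l.reverseSlice a b).getLast? = l.getLast? := by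
  simp [reverseSlice, getLast?_drop, hb.not_ge,
    getLast?_eq_some_getLast (ne_nil_of_length_pos (by omega : 0 < l.length))]

-- The 2-opt move: the links `l[j] l[j+1]` and `l[k] l[k+1]` are replaced by `l[j] l[k]` and
-- `l[j+1] l[k+1]`.
theorem isChain_reverseSlice {R : α → α → Prop} (hR : ∀ {x y}, R x y → R y x) {j k : ℕ}
    (hjk : j < k) (hk : k + 1 < l.length)
    (hl : ∀ i (hi : i + 1 < l.length), i ≠ j → i ≠ k → R l[i] l[i + 1])
    (hjk₁ : R l[j] l[k]) (hjk₂ : R l[j + 1] l[k + 1]) :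
    (l.reverseSlice (j + 1) (k + 1)).IsChain R := by
  have hab : j + 1 ≤ k + 1 := by omega
  rw [isChain_iff_getElem]
  intro i hi
  have hi' : i + 1 < l.length := length_reverseSlice hab ▸ hi
  rcases lt_trichotomy i j with hij | rfl | hji
  · rw [getElem_reverseSlice_of_notMem hab hk.le _ (by omega),
      getElem_reverseSlice_of_notMem hab hk.le _ (by omega)]
    exact hl i hi' (by omega) (by omega)
  · rw [getElem_reverseSlice_of_notMem hab hk.le _ (by omega),
      getElem_reverseSlice_of_mem hab hk.le _ (by omega) (by omega)]
    simpa only [show i + 1 + (k + 1) - 1 - (i + 1) = k by omega] using hjk₁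
  rcases lt_trichotomy i k with hik | rfl | hki
  · rw [getElem_reverseSlice_of_mem hab hk.le _ (by omega) (by omega),
      getElem_reverseSlice_of_mem hab hk.le _ (by omega) (by omega)]
    simp only [show j + 1 + (k + 1) - 1 - i = j + k - i + 1 by omega,
      show j + 1 + (k + 1) - 1 - (i + 1) = j + k - i by omega]
    exact hR (hl (j + k - i) (by omega) (by omega) (by omega))
  · rw [getElem_reverseSlice_of_mem hab hk.le _ (by omega) (by omega),
      getElem_reverseSlice_of_notMem hab hk.le _ (by omega)]
    simpa only [show j + 1 + (i + 1) - 1 - i = j + 1 by omega] using hjk₂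
  · rw [getElem_reverseSlice_of_notMem hab hk.le _ (by omega),
      getElem_reverseSlice_of_notMem hab hk.le _ (by omega)]
    exact hl i hi' (by omega) (by omega)

end List

namespace SimpleGraph

variable {V : Type*}

section Ore

variable [Fintype V] [DecidableEq V]

theorem card_filter_adj_getElem {G : SimpleGraph V} [DecidableRel G.Adj] {l : List V}
    (hnd : l.Nodup) (hmem : ∀ v, v ∈ l) (u : V) :
    (Finset.univ.filter fun i : Fin l.length => G.Adj u l[i]).card = G.degree u :=
  Finset.card_equiv (hnd.getEquivOfForallMemList l hmem) fun i => by simp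

theorem exists_adj_adj_succ {G : SimpleGraph V} [DecidableRel G.Adj] {l : List V}
    (hnd : l.Nodup) (hmem : ∀ v, v ∈ l) {k : ℕ} (hk : k + 1 < l.length)
    (hdeg : Fintype.card V + 1 ≤ G.degree l[k] + G.degree l[k + 1]) :
    ∃ j, ∃ hj : j + 1 < l.length, j ≠ k ∧ G.Adj l[k] l[j] ∧ G.Adj l[k + 1] l[j + 1] := by
  have hn := hnd.length_eq_card hmem
  -- Pigeonhole in `Fin (n + 1)`: the successors of the positions of the neighbours of `l[k]` and
  -- the positions of the neighbours of `l[k + 1]` both avoid `k + 1`.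
  set S := fun u => Finset.univ.filter fun i : Fin l.length => G.Adj u l[i]
  set gap : Fin (l.length + 1) := ⟨k + 1, by omega⟩
  have hsucc : (S l[k]).map (Fin.succEmb _) ⊆ Finset.univ.erase gap := by
    intro z hz
    simp only [S, Finset.mem_map, Finset.mem_filter, Finset.mem_univ, true_and] at hz
    obtain ⟨i, hi, rfl⟩ := hz
    refine Finset.mem_erase.2 ⟨fun h => ?_, Finset.mem_univ _⟩
    have hik : i.val = k := by simpa [gap, Fin.ext_iff] using h
    simp only [Fin.getElem_fin, hik] at hi
    exact G.irrefl hi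
  have hcast : (S l[k + 1]).map Fin.castSuccEmb ⊆ Finset.univ.erase gap := by
    intro z hz
    simp only [S, Finset.mem_map, Finset.mem_filter, Finset.mem_univ, true_and] at hz
    obtain ⟨i, hi, rfl⟩ := hz
    refine Finset.mem_erase.2 ⟨fun h => ?_, Finset.mem_univ _⟩
    have hik : i.val = k + 1 := by simpa [gap, Fin.ext_iff] using h
    simp only [Fin.getElem_fin, hik] at hi
    exact G.irrefl hi
  obtain ⟨z, hz⟩ := Finset.inter_nonempty_of_card_lt_card_add_card hsucc hcast (by
    simp only [Finset.card_map, S, card_filter_adj_getElem hnd hmem]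
    rw [Finset.card_erase_of_mem (Finset.mem_univ _), Finset.card_univ, Fintype.card_fin]
    omega)
  simp only [S, Finset.mem_inter, Finset.mem_map, Finset.mem_filter, Finset.mem_univ,
    true_and] at hz
  obtain ⟨⟨i, hi, rfl⟩, ⟨i', hi', hii'⟩⟩ := hz
  have hval : i'.val = i.val + 1 := by simpa [Fin.ext_iff] using hii'
  simp only [Fin.getElem_fin, hval] at hi hi'
  exact ⟨i, by omega, fun h => G.irrefl (by simpa only [h] using hi), hi, hi'⟩

theorem exists_isChain_of_isChain_sup_edge {G : SimpleGraph V} [DecidableRel G.Adj] {u v : V}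
    (hdeg : Fintype.card V + 1 ≤ G.degree u + G.degree v) {l : List V}
    (hl : l.IsChain (G ⊔ edge u v).Adj) (hnd : l.Nodup) (hmem : ∀ w, w ∈ l) :
    ∃ l' : List V, l'.IsChain G.Adj ∧ l'.Perm l ∧ l'.head? = l.head? ∧
      l'.getLast? = l.getLast? := by
  by_cases hG : l.IsChain G.Adj
  · exact ⟨l, hG, List.Perm.refl l, rfl, rfl⟩
  obtain ⟨k, hk, hkG⟩ : ∃ k, ∃ hk : k + 1 < l.length, ¬ G.Adj l[k] l[k + 1] := by
    simpa [List.isChain_iff_getElem] using hG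
  have hedge : ∀ i (hi : i + 1 < l.length), ¬ G.Adj l[i] l[i + 1] →
      (l[i] = u ∧ l[i + 1] = v ∨ l[i] = v ∧ l[i + 1] = u) := by
    intro i hi hiG
    have := List.isChain_iff_getElem.1 hl i hi
    simp only [sup_adj, edge_adj, hiG, false_or] at this
    exact this.1
  have hother : ∀ i (hi : i + 1 < l.length), i ≠ k → G.Adj l[i] l[i + 1] := by
    intro i hi hik
    by_contra hiG
    have hinj : ∀ {p q} {hp : p < l.length} {hq : q < l.length}, l[p] = l[q] → p = q :=
      hnd.getElem_inj_iff.1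
    rcases hedge i hi hiG with ⟨hi₁, hi₂⟩ | ⟨hi₁, hi₂⟩ <;>
      rcases hedge k hk hkG with ⟨hk₁, hk₂⟩ | ⟨hk₁, hk₂⟩
    · exact hik (hinj (hi₁.trans hk₁.symm))
    · exact absurd (hinj (hi₂.trans hk₁.symm)) (by have := hinj (hi₁.trans hk₂.symm); omega)
    · exact absurd (hinj (hi₂.trans hk₁.symm)) (by have := hinj (hi₁.trans hk₂.symm); omega)
    · exact hik (hinj (hi₁.trans hk₁.symm))
  have hdeg' : Fintype.card V + 1 ≤ G.degree l[k] + G.degree l[k + 1] := by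
    rcases hedge k hk hkG with ⟨hu, hv⟩ | ⟨hv, hu⟩ <;> rw [hu, hv] <;> omega
  obtain ⟨j, hj, hjk, hadj, hadj'⟩ := exists_adj_adj_succ hnd hmem hk hdeg'
  rcases hjk.lt_or_gt with hjk | hkj
  · refine ⟨l.reverseSlice (j + 1) (k + 1), ?_, List.reverseSlice_perm (by omega),
      List.head?_reverseSlice (by omega), List.getLast?_reverseSlice hk⟩
    exact List.isChain_reverseSlice G.adj_symm hjk hk (fun i hi _ hik => hother i hi hik)
      hadj.symm hadj'.symm
  · refine ⟨l.reverseSlice (k + 1) (j + 1), ?_, List.reverseSlice_perm (by omega),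
      List.head?_reverseSlice (by omega), List.getLast?_reverseSlice hj⟩
    exact List.isChain_reverseSlice G.adj_symm hkj hj (fun i hi hik _ => hother i hi hik)
      hadj hadj'

theorem exists_nodup_head?_getLast? {x y : V} (hxy : x ≠ y) :
    ∃ l : List V, l.Nodup ∧ (∀ v, v ∈ l) ∧ l.head? = some x ∧ l.getLast? = some y := by
  refine ⟨x :: (((Finset.univ.erase x).erase y).toList ++ [y]), ?_, fun v => ?_, rfl, ?_⟩
  · simpa [List.nodup_append, hxy, Finset.nodup_toList] using fun _ h _ => h
  · by_cases hx : v = x <;> by_cases hy : v = y <;> simp [hx, hy]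
  · rw [← List.cons_append, List.getLast?_concat]

theorem exists_hamiltonian_list_of_ore (G : SimpleGraph V) [hdec : DecidableRel G.Adj]
    (hG : ∀ u v, u ≠ v → ¬ G.Adj u v → Fintype.card V + 1 ≤ G.degree u + G.degree v)
    {x y : V} (hxy : x ≠ y) :
    ∃ l : List V, l.IsChain G.Adj ∧ l.Nodup ∧ (∀ v, v ∈ l) ∧
      l.head? = some x ∧ l.getLast? = some y := by
  -- Downward induction in the finite lattice of graphs on `V`.
  revert hdec hG
  induction G using WellFoundedGT.induction with
  | _ G ih =>
  intro _ hG
  by_cases hcomplete : ∀ u v, u ≠ v → G.Adj u v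
  · obtain ⟨l, hnd, hmem, hx, hy⟩ := exists_nodup_head?_getLast? hxy
    exact ⟨l, (hnd.imp (hcomplete _ _)).isChain, hnd, hmem, hx, hy⟩
  push Not at hcomplete
  obtain ⟨u, v, huv, hnadj⟩ := hcomplete
  classical
  have hG' : ∀ a b, a ≠ b → ¬ (G ⊔ edge u v).Adj a b →
      Fintype.card V + 1 ≤ (G ⊔ edge u v).degree a + (G ⊔ edge u v).degree b := fun a b hab h =>
    (hG a b hab fun h' => h (Or.inl h')).trans
      (add_le_add (degree_le_of_le le_sup_left) (degree_le_of_le le_sup_left))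
  obtain ⟨l, hl, hnd, hmem, hx, hy⟩ := ih _ (G.lt_sup_edge u v huv hnadj) hG'
  obtain ⟨l', hl', hperm, hx', hy'⟩ :=
    exists_isChain_of_isChain_sup_edge (hG u v huv hnadj) hl hnd hmem
  exact ⟨l', hl', hperm.nodup_iff.2 hnd, fun w => hperm.mem_iff.2 (hmem w), hx'.trans hx,
    hy'.trans hy⟩

end Ore

section SquareWalk

variable (G : SimpleGraph V)

def IsSquareWalk (l : List V) : Prop :=
  ∀ i j (hij : i < j) (hj : j < l.length), j ≤ i + 2 → G.Adj (l[i]'(hij.trans hj)) l[j]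

variable {G}

theorem IsSquareWalk.of_prefix {l l' : List V} (h : G.IsSquareWalk l') (hl : l <+: l') :
    G.IsSquareWalk l := by
  intro i j hij hj hji
  rw [hl.getElem, hl.getElem]
  exact h i j hij (lt_of_lt_of_le hj hl.length_le) hji

theorem isSquarePath_iff {l : List V} : IsSquarePath G l ↔ l.Nodup ∧ G.IsSquareWalk l := by
  refine and_congr_right fun _ => ⟨fun h i j hij hj hji => ?_, fun h i j hij => ?_⟩
  · exact h ⟨i, hij.trans hj⟩ ⟨j, hj⟩ (by simp only; omega)
  · exact h i j (by omega) j.isLt (by omega)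

-- The two entries appended to `l` account for the pairs of the cycle that wrap around.
theorem hasSquareHamCycle_of_isSquareWalk [Fintype V] [DecidableEq V] {l : List V}
    (hnd : l.Nodup) (hmem : ∀ v, v ∈ l) (hl : 2 ≤ l.length)
    (hw : G.IsSquareWalk (l ++ l.take 2)) : HasSquareHamCycle G := by
  have hcard := hnd.length_eq_card hmem
  refine ⟨(finCongr hcard.symm).trans (hnd.getEquivOfForallMemList l hmem), fun i j hij => ?_⟩
  have hwrap : ∀ p (hp : p < l.length + 2),
      (l ++ l.take 2)[p]'(by simp; omega) = l[p % l.length]'(Nat.mod_lt _ (by omega)) := by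
    intro p hp
    rw [List.getElem_append]
    split_ifs with h
    · simp only [Nat.mod_eq_of_lt h]
    · simp only [List.getElem_take, Nat.mod_eq_sub_mod (not_lt.1 h),
        Nat.mod_eq_of_lt (show p - l.length < l.length by omega)]
  obtain ⟨d, hd, hj⟩ : ∃ d, (d = 1 ∨ d = 2) ∧ (i.val + d) % l.length = j.val := by
    rw [hcard]
    rcases hij with h | h
    exacts [⟨1, .inl rfl, h⟩, ⟨2, .inr rfl, h⟩]
  have hi : i.val < l.length := by rw [hcard]; exact i.isLt
  have := hw i (i + d) (by omega) (by simp; omega) (by omega)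
  rw [hwrap _ (by omega), hwrap _ (by omega)] at this
  simpa [hj, Nat.mod_eq_of_lt hi] using this

end SquareWalk

section Triangles

variable {ι κ : Type*} (H : SimpleGraph V) (a : κ → ι → V)

def triangleGraph : SimpleGraph ι where
  Adj k l := k ≠ l ∧ ∀ i j, i ≠ j → H.Adj (a i k) (a j l)
  symm := ⟨fun _ _ h => ⟨h.1.symm, fun i j hij => (h.2 j i hij.symm).symm⟩⟩
  loopless := ⟨fun _ h => h.1 rfl⟩

instance [DecidableEq ι] [Fintype κ] [DecidableEq κ] [DecidableRel H.Adj] :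
    DecidableRel (H.triangleGraph a).Adj :=
  fun k l => inferInstanceAs (Decidable (k ≠ l ∧ ∀ i j, i ≠ j → H.Adj (a i k) (a j l)))

variable {H a} in
@[simp]
theorem triangleGraph_adj {k l : ι} :
    (H.triangleGraph a).Adj k l ↔ k ≠ l ∧ ∀ i j, i ≠ j → H.Adj (a i k) (a j l) :=
  Iff.rfl

theorem degree_compl_triangleGraph_le [Fintype ι] [DecidableEq ι] [Fintype κ] [DecidableEq κ]
    [DecidableRel H.Adj] (k : ι) {d : ℕ}
    (hd : ∀ i j, i ≠ j → (Finset.univ.filter fun l => ¬ H.Adj (a i k) (a j l)).card ≤ d) :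
    (H.triangleGraph a)ᶜ.degree k ≤ (Finset.univ : Finset κ).offDiag.card * d := by
  have hsub : (H.triangleGraph a)ᶜ.neighborFinset k ⊆ (Finset.univ : Finset κ).offDiag.biUnion
      fun p => Finset.univ.filter fun l => ¬ H.Adj (a p.1 k) (a p.2 l) := by
    intro l hl
    rw [mem_neighborFinset, compl_adj, triangleGraph_adj] at hl
    push Not at hl
    obtain ⟨i, j, hij, hadj⟩ := hl.2 hl.1
    simp only [Finset.mem_biUnion, Finset.mem_offDiag, Finset.mem_univ, true_and,
      Finset.mem_filter]
    exact ⟨(i, j), hij, hadj⟩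
  refine (Finset.card_le_card hsub).trans (Finset.card_biUnion_le_card_mul _ _ _ ?_)
  rintro ⟨i, j⟩ hij
  exact hd i j (Finset.mem_offDiag.1 hij).2.2

end Triangles

section Labelling

variable {ι : Type*} [DecidableEq V] {H : SimpleGraph V}

theorem card_inter_eq_one_of_isClique {r : ℕ} {A : Fin r → Finset V}
    (hA : ∀ v, ∃ i, v ∈ A i) (hind : ∀ i, H.IsIndepSet (A i : Set V)) {s : Finset V}
    (hs : H.IsClique (s : Set V)) (hcard : s.card = r) (i : Fin r) : (s ∩ A i).card = 1 := by
  have hle : ∀ j, (s ∩ A j).card ≤ 1 := fun j => Finset.card_le_one.2 fun u hu v hv => by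
    rw [Finset.mem_inter] at hu hv
    by_contra huv
    exact hind j hu.2 hv.2 huv (hs hu.1 hv.1 huv)
  have hcover : s ⊆ Finset.univ.biUnion fun j => s ∩ A j := fun v hv => by
    obtain ⟨j, hj⟩ := hA v
    exact Finset.mem_biUnion.2 ⟨j, Finset.mem_univ _, Finset.mem_inter.2 ⟨hv, hj⟩⟩
  have hsum : r ≤ ∑ j, (s ∩ A j).card :=
    hcard.symm.le.trans ((Finset.card_le_card hcover).trans Finset.card_biUnion_le)
  by_contra hi
  have hlt : ∑ j, (s ∩ A j).card < ∑ _j : Fin r, 1 :=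
    Finset.sum_lt_sum (fun j _ => hle j) ⟨i, Finset.mem_univ _, by have := hle i; omega⟩
  simp only [Finset.sum_const, Finset.card_univ, Fintype.card_fin, smul_eq_mul, mul_one] at hlt
  omega

structure IsTriangleLabelling (H : SimpleGraph V) (A : Fin 3 → Finset V) (t : ι → Finset V)
    (a : Fin 3 → ι → V) : Prop where
  injective2 : Function.Injective2 a
  surjective : ∀ v, ∃ i k, a i k = v
  adj : ∀ k i j, i ≠ j → H.Adj (a i k) (a j k)
  mem_part : ∀ i k, a i k ∈ A i
  triangle_eq : ∀ k, t k = {a 0 k, a 1 k, a 2 k}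

theorem exists_isTriangleLabelling {A : Fin 3 → Finset V} {t : ι → Finset V}
    (hAdisj : ∀ i j, i ≠ j → Disjoint (A i) (A j)) (hAcover : ∀ v, ∃ i, v ∈ A i)
    (hAind : ∀ i, ∀ u ∈ A i, ∀ v ∈ A i, ¬ H.Adj u v)
    (htri : ∀ k, (t k).card = 3 ∧ ∀ u ∈ t k, ∀ v ∈ t k, u ≠ v → H.Adj u v)
    (htdisj : ∀ k l, k ≠ l → Disjoint (t k) (t l)) (htcover : ∀ v, ∃ k, v ∈ t k) :
    ∃ a, IsTriangleLabelling H A t a := by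
  choose a ha using fun i k => Finset.card_eq_one.1 <| card_inter_eq_one_of_isClique hAcover
    (fun i u hu v hv _ => hAind i u hu v hv) (fun u hu v hv => (htri k).2 u hu v hv) (htri k).1 i
  have hmem : ∀ i k, a i k ∈ t k ∧ a i k ∈ A i := fun i k =>
    Finset.mem_inter.1 (ha i k ▸ Finset.mem_singleton_self _)
  have hmem_iff : ∀ v k, v ∈ t k ↔ ∃ i, a i k = v := fun v k => by
    refine ⟨fun hv => ?_, by rintro ⟨i, rfl⟩; exact (hmem i k).1⟩
    obtain ⟨i, hi⟩ := hAcover v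
    exact ⟨i, (Finset.mem_singleton.1 (ha i k ▸ Finset.mem_inter.2 ⟨hv, hi⟩)).symm⟩
  have hinj : Function.Injective2 a := fun i j k l h => by
    constructor <;> by_contra hne
    · exact Finset.disjoint_left.1 (hAdisj i j hne) (hmem i k).2 (h ▸ (hmem j l).2)
    · exact Finset.disjoint_left.1 (htdisj k l hne) (hmem i k).1 (h ▸ (hmem j l).1)
  refine ⟨a, hinj, fun v => ?_, fun k i j hij => ?_, fun i k => (hmem i k).2, fun k => ?_⟩
  · obtain ⟨k, hk⟩ := htcover v
    obtain ⟨i, rfl⟩ := (hmem_iff v k).1 hk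
    exact ⟨i, k, rfl⟩
  · exact (htri k).2 _ (hmem i k).1 _ (hmem j k).1 fun h => hij (hinj h).1
  · ext v
    rw [hmem_iff, Fin.exists_fin_succ, Fin.exists_fin_two]
    simp only [Finset.mem_insert, Finset.mem_singleton, eq_comm]
    rfl

theorem card_filter_not_adj_le_floor [Fintype ι] [DecidableRel H.Adj] {A : Fin 3 → Finset V}
    {t : ι → Finset V} {a : Fin 3 → ι → V} (hlab : IsTriangleLabelling H A t a) {m : ℕ}
    {α' : ℝ} {v : V} {j : Fin 3} (hA : (A j).card = m)
    (hv : (1 - α') * m ≤ ((A j).filter (H.Adj v)).card) :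
    (Finset.univ.filter fun l => ¬ H.Adj v (a j l)).card ≤ ⌊α' * m⌋₊ := by
  have hinj : (Finset.univ.filter fun l => ¬ H.Adj v (a j l)).card ≤
      ((A j).filter fun w => ¬ H.Adj v w).card :=
    Finset.card_le_card_of_injOn (a j)
      (fun l hl => by simpa [hlab.mem_part j l] using hl) (fun l _ l' _ h => (hlab.injective2 h).2)
  have hsplit : (((A j).filter (H.Adj v)).card : ℝ) + ((A j).filter fun w => ¬ H.Adj v w).card
      = m := by
    exact_mod_cast (Finset.card_filter_add_card_filter_not (H.Adj v)).trans hA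
  exact Nat.le_floor ((Nat.cast_le.2 hinj).trans (by linarith))

theorem add_one_le_two_mul_degree_triangleGraph [DecidableRel H.Adj] {m : ℕ} (hm : 6 ≤ m)
    {A : Fin 3 → Finset V} {t : Fin m → Finset V} {a : Fin 3 → Fin m → V}
    (hlab : IsTriangleLabelling H A t a) {α' : ℝ} (hα' : α' ≤ 1 / 24)
    (hAcard : ∀ i, (A i).card = m)
    (hdeg : ∀ i j, i ≠ j → ∀ v ∈ A i, (1 - α') * m ≤ (((A j).filter (H.Adj v)).card : ℝ))
    (k : Fin m) : m + 1 ≤ 2 * (H.triangleGraph a).degree k := by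
  have hfloor : 24 * ⌊α' * m⌋₊ ≤ m := by
    have : ⌊α' * m⌋₊ ≤ ⌊(m : ℝ) / (24 : ℕ)⌋₊ :=
      Nat.floor_le_floor (by push_cast; nlinarith [m.cast_nonneg (α := ℝ)])
    rw [Nat.floor_div_eq_div] at this
    omega
  have hcompl : (H.triangleGraph a)ᶜ.degree k ≤ 6 * ⌊α' * m⌋₊ :=
    degree_compl_triangleGraph_le H a k fun i j hij =>
      card_filter_not_adj_le_floor hlab (hAcard j) (hdeg i j hij _ (hlab.mem_part i k))
  have hc := (H.triangleGraph a).degree_compl k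
  have hlt := (H.triangleGraph a).degree_lt_card_verts k
  rw [Fintype.card_fin] at hc hlt
  omega

end Labelling

section TriangleWalk

variable {ι : Type*} (a : Fin 3 → ι → V)

def triangleWalk (L : List ι) : List V := L.flatMap fun k => [a 0 k, a 1 k, a 2 k]

variable {a}

@[simp]
theorem length_triangleWalk (L : List ι) : (triangleWalk a L).length = 3 * L.length := by
  simp [triangleWalk, List.length_flatMap, mul_comm]

theorem getElem_triangleWalk (L : List ι) {p : ℕ} (hp : p < (triangleWalk a L).length) :
    (triangleWalk a L)[p] =
      a ⟨p % 3, Nat.mod_lt _ three_pos⟩ (L[p / 3]'(by simp at hp; omega)) := by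
  induction L generalizing p with
  | nil => simp at hp
  | cons k L ih =>
    have hcons : triangleWalk a (k :: L) = a 0 k :: a 1 k :: a 2 k :: triangleWalk a L := rfl
    simp only [hcons]
    rcases p with _ | _ | _ | q
    · rfl
    · rfl
    · rfl
    · simp only [length_triangleWalk, List.length_cons] at hp
      simp only [List.getElem_cons_succ]
      rw [ih (by simp; omega)]
      simp only [show (q + 1 + 1 + 1) % 3 = q % 3 by omega,
        show (q + 1 + 1 + 1) / 3 = q / 3 + 1 by omega, List.getElem_cons_succ]

theorem triangleWalk_append (L L' : List ι) :
    triangleWalk a (L ++ L') = triangleWalk a L ++ triangleWalk a L' :=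
  List.flatMap_append

theorem take_triangleWalk_cons (k : ι) (L : List ι) :
    (triangleWalk a (k :: L)).take 3 = [a 0 k, a 1 k, a 2 k] :=
  List.take_left' rfl

theorem drop_triangleWalk_concat (L : List ι) (k : ι) :
    (triangleWalk a (L ++ [k])).drop ((triangleWalk a (L ++ [k])).length - 3) =
      [a 0 k, a 1 k, a 2 k] := by
  rw [triangleWalk_append]
  exact List.drop_left' (by simp)

theorem mem_triangleWalk {L : List ι} {k : ι} (hk : k ∈ L) (i : Fin 3) : a i k ∈ triangleWalk a L :=
  List.mem_flatMap.2 ⟨k, hk, by fin_cases i <;> simp⟩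

theorem nodup_triangleWalk (ha : Function.Injective2 a) {L : List ι} (hL : L.Nodup) :
    (triangleWalk a L).Nodup := by
  refine List.nodup_flatMap.2 ⟨fun k _ => ?_, hL.imp fun hkl => ?_⟩
  · simp [fun i j => (ha.eq_iff (b₁ := k) (b₂ := k) (a₁ := i) (a₂ := j))]
  · intro v hv hv'
    simp only [List.mem_cons, List.not_mem_nil, or_false] at hv hv'
    rcases hv with rfl | rfl | rfl <;> rcases hv' with h | h | h <;> exact hkl (ha h).2

theorem isSquareWalk_triangleWalk {H : SimpleGraph V}
    (hblock : ∀ k i j, i ≠ j → H.Adj (a i k) (a j k)) {L : List ι}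
    (hL : L.IsChain (H.triangleGraph a).Adj) : H.IsSquareWalk (triangleWalk a L) := by
  intro p p' hpp' hp' hp'p
  rw [getElem_triangleWalk, getElem_triangleWalk]
  have hne : (⟨p % 3, Nat.mod_lt _ three_pos⟩ : Fin 3) ≠ ⟨p' % 3, Nat.mod_lt _ three_pos⟩ := by
    simp only [ne_eq, Fin.mk.injEq]; omega
  rcases (show p' / 3 = p / 3 ∨ p' / 3 = p / 3 + 1 by omega) with h | h
  · simp only [h]
    exact hblock _ _ _ hne
  · simp only [h]
    exact (List.isChain_iff_getElem.1 hL _ (by simp at hp'; omega)).2 _ _ hne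

theorem IsTriangleLabelling.hasSquareHamCycle [Fintype V] [DecidableEq V] {H : SimpleGraph V}
    {A : Fin 3 → Finset V} {t : ι → Finset V} (hlab : H.IsTriangleLabelling A t a) {L : List ι}
    (hL : L.IsChain (H.triangleGraph a).Adj) (hnd : L.Nodup) (hmem : ∀ k, k ∈ L) {x y : ι}
    (hx : L.head? = some x) (hy : L.getLast? = some y) (hyx : (H.triangleGraph a).Adj y x) :
    HasSquareHamCycle H := by
  obtain ⟨L₀, rfl⟩ := List.head?_eq_some_iff.1 hx
  have hcycle : (x :: L₀ ++ [x]).IsChain (H.triangleGraph a).Adj :=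
    List.isChain_append.2 ⟨hL, List.isChain_singleton x, fun y' hy' x' hx' => by simp_all⟩
  have hprefix : triangleWalk a (x :: L₀) ++ (triangleWalk a (x :: L₀)).take 2 <+:
      triangleWalk a (x :: L₀ ++ [x]) := by
    rw [triangleWalk_append, List.prefix_append_right_inj]
    exact ⟨[a 2 x], rfl⟩
  refine hasSquareHamCycle_of_isSquareWalk (nodup_triangleWalk hlab.injective2 hnd) (fun v => ?_)
    (by simp; omega) ((isSquareWalk_triangleWalk hlab.adj hcycle).of_prefix hprefix)
  obtain ⟨i, k, rfl⟩ := hlab.surjective v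
  exact mem_triangleWalk (hmem k) i

theorem IsTriangleLabelling.exists_isSquarePath [Fintype V] [DecidableEq V] {H : SimpleGraph V}
    {A : Fin 3 → Finset V} {t : ι → Finset V} (hlab : H.IsTriangleLabelling A t a) {L : List ι}
    (hL : L.IsChain (H.triangleGraph a).Adj) (hnd : L.Nodup) (hmem : ∀ k, k ∈ L) {x y : ι}
    (hx : L.head? = some x) (hy : L.getLast? = some y) :
    ∃ l : List V, IsSquarePath H l ∧ l.length = Fintype.card V ∧ (∀ v, v ∈ l) ∧
      (l.take 3).toFinset = t x ∧ (l.drop (l.length - 3)).toFinset = t y := by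
  have hcover : ∀ v, v ∈ triangleWalk a L := fun v => by
    obtain ⟨i, k, rfl⟩ := hlab.surjective v
    exact mem_triangleWalk (hmem k) i
  have hnd' := nodup_triangleWalk hlab.injective2 hnd
  refine ⟨triangleWalk a L, isSquarePath_iff.2 ⟨hnd', isSquareWalk_triangleWalk hlab.adj hL⟩,
    hnd'.length_eq_card hcover, hcover, ?_, ?_⟩
  · obtain ⟨L₀, rfl⟩ := List.head?_eq_some_iff.1 hx
    rw [take_triangleWalk_cons, hlab.triangle_eq]
    simp
  · obtain ⟨L₀, rfl⟩ := List.getLast?_eq_some_iff.1 hy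
    rw [drop_triangleWalk_concat, hlab.triangle_eq]
    simp

end TriangleWalk

end SimpleGraph

theorem stmt3 :
    ∃ α'₀ : ℝ, 0 < α'₀ ∧ ∀ α' : ℝ, 0 < α' → α' ≤ α'₀ →
    ∃ n₀ : ℕ, ∀ (V : Type) [Fintype V] [DecidableEq V] (H : SimpleGraph V)
      [DecidableRel H.Adj] (m : ℕ) (hm : 0 < m) (A : Fin 3 → Finset V)
      (t : Fin m → Finset V),
      Fintype.card V = 3 * m →
      n₀ ≤ 3 * m →
      (∀ i, (A i).card = m) →
      (∀ i j, i ≠ j → Disjoint (A i) (A j)) →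
      A 0 ∪ A 1 ∪ A 2 = Finset.univ →
      (∀ i, ∀ u ∈ A i, ∀ v ∈ A i, ¬ H.Adj u v) →
      (∀ i j, i ≠ j → ∀ v ∈ A i, (1 - α') * m ≤ (((A j).filter (H.Adj v)).card : ℝ)) →
      (∀ k, (t k).card = 3 ∧ ∀ u ∈ t k, ∀ v ∈ t k, u ≠ v → H.Adj u v) →
      (∀ k l, k ≠ l → Disjoint (t k) (t l)) →
      (∀ v : V, ∃ k, v ∈ t k) →
      HasSquareHamCycle H ∧
      ∃ l : List V, IsSquarePath H l ∧ l.length = Fintype.card V ∧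
        (∀ v : V, v ∈ l) ∧
        (l.take 3).toFinset = t ⟨0, hm⟩ ∧
        (l.drop (l.length - 3)).toFinset = t ⟨m - 1, Nat.sub_lt hm one_pos⟩ := by
  refine ⟨1 / 24, by norm_num, fun α' _ hα' => ⟨18, ?_⟩⟩
  intro V _ _ H _ m hm A t _ hn₀ hAcard hAdisj hAcover hAind hdeg htri htdisj htcover
  have hApart : ∀ v, ∃ i, v ∈ A i := fun v => by
    have hv : v ∈ A 0 ∪ A 1 ∪ A 2 := hAcover ▸ Finset.mem_univ v
    simpa [Fin.exists_fin_succ, or_assoc] using hv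
  obtain ⟨a, hlab⟩ :=
    SimpleGraph.exists_isTriangleLabelling hAdisj hApart hAind htri htdisj htcover
  have hT := SimpleGraph.add_one_le_two_mul_degree_triangleGraph (by omega) hlab hα' hAcard hdeg
  have hham (x y : Fin m) (hxy : x ≠ y) := (H.triangleGraph a).exists_hamiltonian_list_of_ore
    (fun u v _ _ => by rw [Fintype.card_fin]; linarith [hT u, hT v]) hxy
  obtain ⟨z, hz⟩ := ((H.triangleGraph a).degree_pos_iff_exists_adj ⟨0, hm⟩).1
    (by linarith [hT ⟨0, hm⟩])
  obtain ⟨L, hL, hnd, hmem, hx, hy⟩ := hham _ _ hz.ne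
  obtain ⟨L', hL', hnd', hmem', hx', hy'⟩ := hham ⟨0, hm⟩ ⟨m - 1, Nat.sub_lt hm one_pos⟩
    (by simp [Fin.ext_iff]; omega)
  exact ⟨hlab.hasSquareHamCycle hL hnd hmem hx hy hz.symm,
    hlab.exists_isSquarePath hL' hnd' hmem' hx' hy'⟩
end

section
/- For all reals c, γ with 0 < c < 1/3 and 0 < γ < 1/3 there exists n₀ ∈ ℕ with the following property: let G be a graph on n ≥ n₀ vertices, let s = ⌊c·log₂ n⌋, and suppose G contains K₃(s) with classes A₁, A₂, A₃; write K for A₁ ∪ A₂ ∪ A₃. If B ⊆ V(G) \ K satisfies |B| ≥ γn and e(B, K) ≥ (2/3 + 2γ)|B||K|, then there exist sets A'₁ ⊆ A₁, A'₂ ⊆ A₂, A'₃ ⊆ A₃ and B' ⊆ B, each of size ⌊γs⌋, such that every two vertices lying in different ones of these four sets are adjacent in G. -/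
/-!
Let `K = A₁ ∪ A₂ ∪ A₃`, so `|K| = 3s`. Averaging the edge density over `B` shows that at least
`γ|B| ≥ γ²n` vertices of `B` have at least `(2/3 + γ)|K|` neighbours in `K`, hence at least `3γs`
neighbours in each `Aᵢ`; call this set `X`. Double counting the pairs `(x, S)` with `S` a `t`-subset
of the neighbourhood of `x` in a class `A` of size `s` gives a `t`-set `S ⊆ A` whose common
neighbourhood in `X` has at least `|X| ((d + 1 - t) / s) ^ t ≥ |X| (2γ) ^ t` elements. Doing this
for the three classes in turn leaves at least `γ²n (2γ) ^ (3t)` common neighbours, and since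
`t ≤ γc log₂ n` we have `(2γ) ^ (3t) ≥ n ^ (-κ)` with `κ < 1` (this is where `c < 1/3` enters),
so there are more than `t` of them once `n` is large.
-/

open Finset Filter Real

section CommonNeighbours

variable {α β : Type*} (r : α → β → Prop) [∀ a b, Decidable (r a b)]

theorem card_mul_choose_le_sum_card_filter_forall (X : Finset α) (A : Finset β) {d : ℕ} (t : ℕ)
    (hd : ∀ x ∈ X, d ≤ #{b ∈ A | r x b}) :
    #X * d.choose t ≤ ∑ S ∈ A.powersetCard t, #{x ∈ X | ∀ b ∈ S, r x b} := by
  have hfilter : ∀ x, {S ∈ A.powersetCard t | ∀ b ∈ S, r x b} = {b ∈ A | r x b}.powersetCard t := by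
    intro x
    ext S
    simp only [mem_filter, mem_powersetCard, subset_iff]
    grind
  calc #X * d.choose t = ∑ _x ∈ X, d.choose t := by rw [sum_const, smul_eq_mul]
    _ ≤ ∑ x ∈ X, #{S ∈ A.powersetCard t | ∀ b ∈ S, r x b} := sum_le_sum fun x hx => by
        rw [hfilter, card_powersetCard]
        exact Nat.choose_le_choose t (hd x hx)
    _ = ∑ S ∈ A.powersetCard t, #{x ∈ X | ∀ b ∈ S, r x b} := by
        simp only [card_filter]
        exact sum_comm

theorem exists_subset_card_mul_pow_le_card_filter_forall (X : Finset α) (A : Finset β) {d t : ℕ}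
    (ht : t ≤ #A) (hd : ∀ x ∈ X, d ≤ #{b ∈ A | r x b}) :
    ∃ S ⊆ A, #S = t ∧ #X * (d + 1 - t) ^ t ≤ #{x ∈ X | ∀ b ∈ S, r x b} * #A ^ t := by
  obtain ⟨S, hS, hSle⟩ : ∃ S ∈ A.powersetCard t,
      #X * d.choose t ≤ (#A).choose t * #{x ∈ X | ∀ b ∈ S, r x b} := by
    refine exists_le_of_sum_le (powersetCard_nonempty.2 ht) ?_
    rw [sum_const, card_powersetCard, smul_eq_mul, ← mul_sum]
    exact Nat.mul_le_mul_left _ (card_mul_choose_le_sum_card_filter_forall r X A t hd)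
  rw [mem_powersetCard] at hS
  refine ⟨S, hS.1, hS.2, ?_⟩
  calc #X * (d + 1 - t) ^ t ≤ #X * d.descFactorial t :=
        Nat.mul_le_mul_left _ (Nat.pow_sub_le_descFactorial d t)
    _ = t.factorial * (#X * d.choose t) := by
        rw [Nat.descFactorial_eq_factorial_mul_choose]; ring
    _ ≤ t.factorial * ((#A).choose t * #{x ∈ X | ∀ b ∈ S, r x b}) := Nat.mul_le_mul_left _ hSle
    _ = #{x ∈ X | ∀ b ∈ S, r x b} * (#A).descFactorial t := by
        rw [Nat.descFactorial_eq_factorial_mul_choose]; ring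
    _ ≤ #{x ∈ X | ∀ b ∈ S, r x b} * #A ^ t := Nat.mul_le_mul_left _ (Nat.descFactorial_le_pow _ _)

theorem exists_fin_subsets_card_mul_pow_le_card_common (X : Finset α) {k s t d : ℕ}
    (A : Fin k → Finset β) (hA : ∀ i, #(A i) = s) (hts : t ≤ s)
    (hd : ∀ i, ∀ x ∈ X, d ≤ #{b ∈ A i | r x b}) :
    ∃ S : Fin k → Finset β, (∀ i, S i ⊆ A i) ∧ (∀ i, #(S i) = t) ∧
      ∃ Y ⊆ X, (∀ x ∈ Y, ∀ i, ∀ b ∈ S i, r x b) ∧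
        #X * (d + 1 - t) ^ (t * k) ≤ #Y * s ^ (t * k) := by
  induction k generalizing X with
  | zero =>
    exact ⟨Fin.elim0, fun i => i.elim0, fun i => i.elim0, X, Subset.rfl, fun _ _ i => i.elim0,
      le_rfl⟩
  | succ k ih =>
    obtain ⟨S, hSA, hSc, Y, hYX, hYS, hY⟩ :=
      ih X (fun i => A i.succ) (fun i => hA i.succ) (fun i => hd i.succ)
    obtain ⟨S₀, hS₀A, hS₀c, hS₀⟩ := exists_subset_card_mul_pow_le_card_filter_forall r Y (A 0)
      ((hA 0).symm ▸ hts) (fun x hx => hd 0 x (hYX hx))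
    refine ⟨Fin.cons S₀ S, Fin.forall_fin_succ.2 ⟨hS₀A, hSA⟩,
      Fin.forall_fin_succ.2 ⟨hS₀c, hSc⟩, {x ∈ Y | ∀ b ∈ S₀, r x b}, (filter_subset _ _).trans hYX,
      ?_, ?_⟩
    · intro x hx
      rw [mem_filter] at hx
      exact Fin.forall_fin_succ.2 ⟨hx.2, hYS x hx.1⟩
    · rw [hA 0] at hS₀
      calc #X * (d + 1 - t) ^ (t * (k + 1))
          = #X * (d + 1 - t) ^ (t * k) * (d + 1 - t) ^ t := by ring
        _ ≤ #Y * s ^ (t * k) * (d + 1 - t) ^ t := Nat.mul_le_mul_right _ hY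
        _ = #Y * (d + 1 - t) ^ t * s ^ (t * k) := by ring
        _ ≤ _ * s ^ t * s ^ (t * k) := Nat.mul_le_mul_right _ hS₀
        _ = _ * s ^ (t * (k + 1)) := by ring

end CommonNeighbours

theorem mul_card_le_card_filter_of_le_sum {ι : Type*} (B : Finset ι) (f : ι → ℝ) {M a ε : ℝ}
    (hM : 0 < M) (ha : 0 ≤ a) (hf : ∀ b ∈ B, f b ≤ M)
    (hsum : (a + ε) * #B * M ≤ ∑ b ∈ B, f b) :
    ε * #B ≤ #{b ∈ B | a * M ≤ f b} := by
  have hhigh : ∑ b ∈ B with a * M ≤ f b, f b ≤ #{b ∈ B | a * M ≤ f b} * M := by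
    simpa using sum_le_card_nsmul {b ∈ B | a * M ≤ f b} f M fun b hb => hf b (mem_filter.1 hb).1
  have hlow : ∑ b ∈ B with ¬a * M ≤ f b, f b ≤ #B * (a * M) := by
    calc ∑ b ∈ B with ¬a * M ≤ f b, f b ≤ #{b ∈ B | ¬a * M ≤ f b} * (a * M) := by
          simpa using sum_le_card_nsmul {b ∈ B | ¬a * M ≤ f b} f (a * M)
            fun b hb => (not_le.1 (mem_filter.1 hb).2).le
      _ ≤ #B * (a * M) := by gcongr; exact filter_subset _ _
  rw [← sum_filter_add_sum_filter_not B (fun b => a * M ≤ f b)] at hsum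
  nlinarith

theorem mul_neg_log_two_mul_lt_half {γ : ℝ} (hγ : 0 < γ) : γ * -log (2 * γ) < 1 / 2 := by
  have := negMulLog_le_one_sub_self (by positivity : (0 : ℝ) ≤ 2 * γ)
  rw [negMulLog] at this
  linarith

theorem eventually_le_sq_mul_pow {c γ : ℝ} (hc0 : 0 < c) (hc1 : c < 1 / 3) (hγ0 : 0 < γ)
    (hγ1 : γ ≤ 1 / 2) :
    ∀ᶠ n : ℕ in atTop, ∀ t : ℕ,
      (t : ℝ) ≤ γ * (c * logb 2 n) → (t : ℝ) ≤ γ ^ 2 * n * (2 * γ) ^ (3 * t) := by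
  have hlog2 : 1 / 2 < log 2 := by linarith [log_two_gt_d9]
  set κ := 3 * c * (γ * -log (2 * γ)) / log 2 with hκ
  have hκ1 : κ < 1 := by
    rw [div_lt_one (by linarith)]
    nlinarith [mul_neg_log_two_mul_lt_half hγ0]
  have hε : 0 < γ * log 2 / c := by positivity
  filter_upwards [eventually_gt_atTop 0, tendsto_natCast_atTop_atTop.eventually
    ((isLittleO_log_rpow_atTop (sub_pos.2 hκ1)).bound hε)] with n hn hlog t ht
  have hn : (0 : ℝ) < n := by exact_mod_cast hn
  rw [norm_of_nonneg (log_natCast_nonneg n), norm_of_nonneg (by positivity)] at hlog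
  have hpow : (n : ℝ) ^ (-κ) = (2 * γ) ^ (3 * (γ * (c * logb 2 n))) := by
    rw [rpow_def_of_pos hn, rpow_def_of_pos (by positivity), logb, hκ]
    congr 1
    field_simp
  calc (t : ℝ) ≤ γ * (c * logb 2 n) := ht
    _ = γ * c / log 2 * log n := by rw [logb]; ring
    _ ≤ γ * c / log 2 * (γ * log 2 / c * (n : ℝ) ^ (1 - κ)) := by gcongr
    _ = γ ^ 2 * n * (n : ℝ) ^ (-κ) := by
        rw [sub_eq_add_neg, rpow_add hn, rpow_one]
        field_simp
    _ ≤ γ ^ 2 * n * (2 * γ) ^ ((3 * t : ℕ) : ℝ) := by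
        rw [hpow]
        refine mul_le_mul_of_nonneg_left (rpow_le_rpow_of_exponent_ge (by positivity) (by linarith)
          (by push_cast; linarith)) (by positivity)
    _ = γ ^ 2 * n * (2 * γ) ^ (3 * t) := by rw [rpow_natCast]

theorem ceil_le_card_filter_of_le_card_filter_union_three {β : Type*} [DecidableEq β]
    (A : Fin 3 → Finset β) {s : ℕ} (hA : ∀ i, #(A i) = s) (p : β → Prop) [DecidablePred p]
    {γ : ℝ} (hp : (2 / 3 + γ) * (3 * s) ≤ (#{a ∈ A 0 ∪ A 1 ∪ A 2 | p a} : ℝ)) (i : Fin 3) :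
    ⌈3 * γ * s⌉₊ ≤ #{a ∈ A i | p a} := by
  have hle : ∀ j, (#{a ∈ A j | p a} : ℝ) ≤ s := fun j => by
    exact_mod_cast (card_filter_le _ _).trans (hA j).le
  have hunion : (#{a ∈ A 0 ∪ A 1 ∪ A 2 | p a} : ℝ) ≤
      #{a ∈ A 0 | p a} + #{a ∈ A 1 | p a} + #{a ∈ A 2 | p a} := by
    rw [filter_union, filter_union]
    exact_mod_cast (card_union_le _ _).trans (Nat.add_le_add_right (card_union_le _ _) _)
  refine Nat.ceil_le.2 ?_
  fin_cases i <;> simp only [Fin.zero_eta, Fin.mk_one, Fin.reduceFinMk] <;>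
    linarith [hle 0, hle 1, hle 2]

theorem card_union_three_of_pairwise_disjoint {β : Type*} [DecidableEq β] (A : Fin 3 → Finset β)
    {s : ℕ} (hA : ∀ i, #(A i) = s) (hdisj : ∀ i j, i ≠ j → Disjoint (A i) (A j)) :
    #(A 0 ∪ A 1 ∪ A 2) = 3 * s := by
  rw [card_union_of_disjoint
      (disjoint_union_left.2 ⟨hdisj 0 2 (by decide), hdisj 1 2 (by decide)⟩),
    card_union_of_disjoint (hdisj 0 1 (by decide)), hA, hA, hA]
  ring

theorem exists_complete_bipartite_of_edge_density {α β : Type*} [DecidableEq β]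
    (r : α → β → Prop) [∀ a b, Decidable (r a b)] {γ : ℝ} (hγ0 : 0 ≤ γ) (hγ1 : γ ≤ 1)
    (A : Fin 3 → Finset β) (B : Finset α) {s t n : ℕ} (hA : ∀ i, #(A i) = s)
    (hdisj : ∀ i j, i ≠ j → Disjoint (A i) (A j)) (hB : γ * n ≤ #B)
    (hE : (2 / 3 + 2 * γ) * #B * #(A 0 ∪ A 1 ∪ A 2) ≤
      (#{p ∈ B ×ˢ (A 0 ∪ A 1 ∪ A 2) | r p.1 p.2} : ℝ))
    (hts : (t : ℝ) ≤ γ * s) (htn : (t : ℝ) ≤ γ ^ 2 * n * (2 * γ) ^ (3 * t)) :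
    ∃ S : Fin 3 → Finset β, (∀ i, S i ⊆ A i) ∧ (∀ i, #(S i) = t) ∧
      ∃ B' ⊆ B, #B' = t ∧ ∀ b ∈ B', ∀ i, ∀ a ∈ S i, r b a := by
  set K := A 0 ∪ A 1 ∪ A 2
  have hK : #K = 3 * s := card_union_three_of_pairwise_disjoint A hA hdisj
  set X := {b ∈ B | (2 / 3 + γ) * #K ≤ (#{a ∈ K | r b a} : ℝ)}
  set d := ⌈3 * γ * s⌉₊
  have hdeg : ∀ i, ∀ b ∈ X, d ≤ #{a ∈ A i | r b a} := fun i b hb =>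
    ceil_le_card_filter_of_le_card_filter_union_three A hA (r b)
      (by have := (mem_filter.1 hb).2; rwa [hK, Nat.cast_mul, Nat.cast_ofNat] at this) i
  have hts' : t ≤ s := by exact_mod_cast hts.trans (mul_le_of_le_one_left (by positivity) hγ1)
  obtain ⟨S, hSA, hSc, Y, hYX, hYS, hY⟩ :=
    exists_fin_subsets_card_mul_pow_le_card_common r X A hA hts' hdeg
  suffices htY : t ≤ #Y by
    obtain ⟨B', hB'Y, hB'⟩ := exists_subset_card_eq htY
    exact ⟨S, hSA, hSc, B', hB'Y.trans (hYX.trans (filter_subset _ _)), hB',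
      fun b hb => hYS b (hB'Y hb)⟩
  rcases Nat.eq_zero_or_pos s with rfl | hs
  · rw [Nat.cast_zero, mul_zero, Nat.cast_nonpos] at hts
    exact hts ▸ Nat.zero_le _
  have hX : γ * #B ≤ #X := by
    have hdeg_sum : #{p ∈ B ×ˢ K | r p.1 p.2} = ∑ b ∈ B, #{a ∈ K | r b a} := by
      simp only [card_filter]
      exact sum_product ..
    refine mul_card_le_card_filter_of_le_sum B _ (by rw [hK]; positivity) (by positivity)
      (fun b _ => by exact_mod_cast card_filter_le K (r b)) ?_
    rw [hdeg_sum] at hE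
    push_cast at hE
    linarith
  have hq : 2 * γ * s ≤ ((d + 1 - t : ℕ) : ℝ) := by
    have hd : 3 * γ * s ≤ d := Nat.le_ceil _
    have htd : (t : ℝ) ≤ d + 1 := by nlinarith
    rw [Nat.cast_sub (by exact_mod_cast htd)]
    push_cast
    linarith
  have hY' : (#X : ℝ) * ((d + 1 - t : ℕ) : ℝ) ^ (t * 3) ≤ #Y * (s : ℝ) ^ (t * 3) := by
    exact_mod_cast hY
  have hspow : (0 : ℝ) < (s : ℝ) ^ (3 * t) := by positivity
  rw [mul_comm t 3] at hY'
  refine Nat.cast_le.1 (le_of_mul_le_mul_right ?_ hspow)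
  calc (t : ℝ) * s ^ (3 * t) ≤ γ ^ 2 * n * (2 * γ) ^ (3 * t) * s ^ (3 * t) := by gcongr
    _ = γ * (γ * n) * (2 * γ * s) ^ (3 * t) := by ring
    _ ≤ γ * #B * (2 * γ * s) ^ (3 * t) := by gcongr
    _ ≤ #X * ((d + 1 - t : ℕ) : ℝ) ^ (3 * t) := by gcongr
    _ ≤ #Y * s ^ (3 * t) := hY'

theorem stmt6 (c γ : ℝ) (hc0 : 0 < c) (hc1 : c < 1/3) (hγ0 : 0 < γ) (hγ1 : γ < 1/3) :
    ∃ n₀ : ℕ, ∀ (V : Type) [Fintype V] [DecidableEq V] (G : SimpleGraph V)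
      [DecidableRel G.Adj] (A : Fin 3 → Finset V) (B : Finset V),
      n₀ ≤ Fintype.card V →
      (∀ i, (A i).card = ⌊c * Real.logb 2 (Fintype.card V)⌋₊) →
      (∀ i j, i ≠ j → Disjoint (A i) (A j)) →
      (∀ i j, i ≠ j → ∀ u ∈ A i, ∀ v ∈ A j, G.Adj u v) →
      Disjoint B (A 0 ∪ A 1 ∪ A 2) →
      γ * Fintype.card V ≤ B.card →
      (2/3 + 2*γ) * B.card * (A 0 ∪ A 1 ∪ A 2).card ≤
        (((B ×ˢ (A 0 ∪ A 1 ∪ A 2)).filter fun p => G.Adj p.1 p.2).card : ℝ) →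
      ∃ (A' : Fin 3 → Finset V) (B' : Finset V),
        (∀ i, A' i ⊆ A i) ∧ B' ⊆ B ∧
        (∀ i, (A' i).card = ⌊γ * (⌊c * Real.logb 2 (Fintype.card V)⌋₊ : ℝ)⌋₊) ∧
        B'.card = ⌊γ * (⌊c * Real.logb 2 (Fintype.card V)⌋₊ : ℝ)⌋₊ ∧
        (∀ i j, i ≠ j → ∀ u ∈ A' i, ∀ v ∈ A' j, G.Adj u v) ∧
        (∀ i, ∀ u ∈ A' i, ∀ v ∈ B', G.Adj u v) := by
  obtain ⟨n₀, hn₀⟩ := eventually_atTop.1 (eventually_le_sq_mul_pow hc0 hc1 hγ0 (by linarith))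
  refine ⟨n₀, fun V _ _ G _ A B hn hA hdisj hcomp _ hB hE => ?_⟩
  set n := Fintype.card V
  set s := ⌊c * logb 2 n⌋₊
  have hlog : 0 ≤ c * logb 2 n :=
    mul_nonneg hc0.le (div_nonneg (log_natCast_nonneg n) (log_nonneg one_le_two))
  have hts : (⌊γ * s⌋₊ : ℝ) ≤ γ * s := Nat.floor_le (by positivity)
  have hsc : γ * s ≤ γ * (c * logb 2 n) := mul_le_mul_of_nonneg_left (Nat.floor_le hlog) hγ0.le
  obtain ⟨S, hSA, hSc, B', hB'B, hB'c, hB'S⟩ :=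
    exists_complete_bipartite_of_edge_density G.Adj hγ0.le (by linarith) A B hA hdisj hB hE hts
      (hn₀ n hn _ (hts.trans hsc))
  exact ⟨S, B', hSA, hB'B, hSc, hB'c,
    fun i j hij u hu v hv => hcomp i j hij u (hSA i hu) v (hSA j hv),
    fun i u hu v hv => (hB'S v hv i u hu).symm⟩
end

section
/- Let G be a graph and let T and T' be two vertex-disjoint triangles in G. Then either there exist orderings x₁, x₂, x₃ of the vertices of T and y₁, y₂, y₃ of the vertices of T' such that x₃, x₁, x₂, y₁, y₂, y₃ is a square path in G, or there exist vertices x₁, x₂ ∈ T and y₁, y₂ ∈ T' with x₁ ≠ x₂ and y₁ ≠ y₂ such that x₁ is not adjacent to y₁ and x₂ is not adjacent to y₂. -/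
open Finset

theorem Finset.exists_eq_triple_of_mem_of_card_eq_three {α : Type*} [DecidableEq α]
    {s : Finset α} {a : α} (ha : a ∈ s) (hs : #s = 3) :
    ∃ b c, a ≠ b ∧ a ≠ c ∧ b ≠ c ∧ s = {a, b, c} := by
  obtain ⟨b, c, hbc, hbc_eq⟩ := card_eq_two.mp (show #(s.erase a) = 2 by
    rw [card_erase_of_mem ha, hs])
  have hb : b ∈ s.erase a := by simp [hbc_eq]
  have hc : c ∈ s.erase a := by simp [hbc_eq]
  refine ⟨b, c, (ne_of_mem_erase hb).symm, (ne_of_mem_erase hc).symm, hbc, ?_⟩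
  rw [← insert_erase ha, hbc_eq]

variable {V : Type*} {G : SimpleGraph V}

theorem isSquarePath_six {a b c d e f : V} (hnodup : [a, b, c, d, e, f].Nodup)
    (hab : G.Adj a b) (hac : G.Adj a c) (hbc : G.Adj b c) (hbd : G.Adj b d)
    (hcd : G.Adj c d) (hce : G.Adj c e) (hde : G.Adj d e) (hdf : G.Adj d f)
    (hef : G.Adj e f) :
    IsSquarePath G [a, b, c, d, e, f] := by
  refine ⟨hnodup, fun i j hij => ?_⟩
  fin_cases i <;> fin_cases j <;> simp at hij ⊢ <;> assumption

theorem exists_isSquarePath_or_not_adj [DecidableEq V] {T T' : Finset V}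
    (hT : G.IsNClique 3 T) (hT' : G.IsNClique 3 T') (hdisj : Disjoint T T')
    {x y : V} (hx : x ∈ T) (hy : y ∈ T') :
    (∃ p q r s, {p, q, x} = T ∧ {r, s, y} = T' ∧ IsSquarePath G [x, p, q, r, s, y]) ∨
      ∃ p ∈ T, ∃ r ∈ T', p ≠ x ∧ r ≠ y ∧ ¬ G.Adj p r := by
  obtain ⟨p, q, hxp, hxq, hpq, rfl⟩ := exists_eq_triple_of_mem_of_card_eq_three hx hT.card_eq
  obtain ⟨r, s, hyr, hys, hrs, rfl⟩ := exists_eq_triple_of_mem_of_card_eq_three hy hT'.card_eq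
  by_cases hcross : G.Adj p r ∧ G.Adj q r ∧ G.Adj q s
  · obtain ⟨hpr, hqr, hqs⟩ := hcross
    obtain ⟨hxp', hxq', hpq'⟩ := SimpleGraph.is3Clique_triple_iff.mp hT
    obtain ⟨hyr', hys', hrs'⟩ := SimpleGraph.is3Clique_triple_iff.mp hT'
    refine .inl ⟨p, q, r, s, by grind, by grind,
      isSquarePath_six ?_ hxp' hxq' hpq' hpr hqr hqs hrs' hyr'.symm hys'.symm⟩
    simp only [disjoint_insert_right, disjoint_singleton_right, mem_insert, mem_singleton]
      at hdisj
    simp only [List.nodup_cons, List.mem_cons, List.not_mem_nil, List.nodup_nil]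
    grind
  · right
    simp only [not_and_or] at hcross
    rcases hcross with h | h | h
    · exact ⟨p, by simp, r, by simp, hxp.symm, hyr.symm, h⟩
    · exact ⟨q, by simp, r, by simp, hxq.symm, hyr.symm, h⟩
    · exact ⟨q, by simp, s, by simp, hxq.symm, hys.symm, h⟩

theorem stmt10 (V : Type) [DecidableEq V] (G : SimpleGraph V) (T T' : Finset V)
    (hT3 : T.card = 3) (hT'3 : T'.card = 3)
    (hT : ∀ u ∈ T, ∀ v ∈ T, u ≠ v → G.Adj u v)
    (hT' : ∀ u ∈ T', ∀ v ∈ T', u ≠ v → G.Adj u v)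
    (hdisj : Disjoint T T') :
    (∃ x₁ x₂ x₃ y₁ y₂ y₃ : V, ({x₁, x₂, x₃} : Finset V) = T ∧
      ({y₁, y₂, y₃} : Finset V) = T' ∧
      IsSquarePath G [x₃, x₁, x₂, y₁, y₂, y₃]) ∨
    (∃ x₁ x₂ y₁ y₂ : V, x₁ ∈ T ∧ x₂ ∈ T ∧ y₁ ∈ T' ∧ y₂ ∈ T' ∧ x₁ ≠ x₂ ∧ y₁ ≠ y₂ ∧
      ¬ G.Adj x₁ y₁ ∧ ¬ G.Adj x₂ y₂) := by
  have hTclique : G.IsNClique 3 T := ⟨fun u hu v hv => hT u hu v hv, hT3⟩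
  have hT'clique : G.IsNClique 3 T' := ⟨fun u hu v hv => hT' u hu v hv, hT'3⟩
  by_cases hnonadj : ∃ x ∈ T, ∃ y ∈ T', ¬ G.Adj x y
  · obtain ⟨x, hx, y, hy, hxy⟩ := hnonadj
    rcases exists_isSquarePath_or_not_adj hTclique hT'clique hdisj hx hy with
      ⟨p, q, r, s, h⟩ | ⟨p, hp, r, hr, hpx, hry, hpr⟩
    · exact .inl ⟨p, q, x, r, s, y, h⟩
    · exact .inr ⟨x, p, y, r, hx, hp, hy, hr, hpx.symm, hry.symm, hxy, hpr⟩
  · push Not at hnonadj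
    obtain ⟨x, hx⟩ : T.Nonempty := card_pos.mp (by omega)
    obtain ⟨y, hy⟩ : T'.Nonempty := card_pos.mp (by omega)
    rcases exists_isSquarePath_or_not_adj hTclique hT'clique hdisj hx hy with
      ⟨p, q, r, s, h⟩ | ⟨p, hp, r, hr, -, -, hpr⟩
    · exact .inl ⟨p, q, x, r, s, y, h⟩
    · exact absurd (hnonadj p hp r hr) hpr
end

section
/- Let G be a graph on n vertices such that deg(u) + deg(v) ≥ (4n − 1)/3 for every pair of distinct non-adjacent vertices u, v, and suppose the minimum degree satisfies δ(G) ≤ n/3 + 2. Then G contains the square of a Hamiltonian path, i.e., an ordering v₁, …, v_n of all n vertices such that v_i is adjacent to v_j whenever 1 ≤ |i − j| ≤ 2. -/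
/-!
Let `w` be a vertex of minimum degree `δ`, `B` its neighbourhood and `A` the set of its other
non-neighbours (if `A` is empty for such `w`, then `G` is complete). The Ore condition for `w`
and `a ∈ A`, together with `δ ≤ n/3 + 2`, gives `deg a ≥ n - 2`: every vertex of `A` is adjacent
to everything except `w`, so pairs of vertices of `A` can be inserted between any two blocks of a
square path. For `b ∈ B` we get `deg b = 1 + |A| + d_B(b)`, and the Ore condition becomes
`d_B(b) + d_B(b') ≥ 3` for non-adjacent `b, b' ∈ B`; also `n + 5 ≤ 3δ`.

If `G[B]` contains a path `b₁b₂b₃b₄`, start with `b₁ b₂ w b₃ b₄` and continue with the other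
vertices of `B` one at a time, separated by pairs from `A`. Otherwise adjacency is transitive on
`B`, so `G[B]` is a disjoint union of cliques of size 2 or 3, at most one of size 2; start with `w`
followed by one clique and separate the other cliques by pairs from `A`. In both cases the bounds
on `δ` leave enough vertices in `A`.
-/

inductive SquareChain {α : Type*} (R : α → α → Prop) : List α → Prop
  | nil : SquareChain R []
  | singleton (a : α) : SquareChain R [a]
  | pair {a b : α} : R a b → SquareChain R [a, b]
  | cons {a b c : α} {l : List α} : R a b → R a c → SquareChain R (b :: c :: l) →
      SquareChain R (a :: b :: c :: l)

namespace SquareChain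

variable {α : Type*} {R : α → α → Prop}

theorem cons_of_forall_take_two {a : α} {l : List α} (h : SquareChain R l)
    (ha : ∀ y ∈ l.take 2, R a y) : SquareChain R (a :: l) := by
  match l, h with
  | [], _ => exact singleton a
  | [b], _ => exact pair (ha b (by simp))
  | b :: c :: l, h => exact cons (ha b (by simp)) (ha c (by simp)) h

theorem append {l₁ l₂ : List α} (h₁ : SquareChain R l₁) (h₂ : SquareChain R l₂)
    (h : ∀ x ∈ l₁.reverse.take 2, ∀ y ∈ l₂.take 2, R x y) : SquareChain R (l₁ ++ l₂) := by
  induction h₁ with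
  | nil => simpa using h₂
  | singleton a => exact h₂.cons_of_forall_take_two (h a (by simp))
  | @pair a b hab =>
    refine (h₂.cons_of_forall_take_two (h b (by simp))).cons_of_forall_take_two ?_
    intro y hy
    rcases l₂ with _ | ⟨c, l₂⟩
    · simp_all
    · simp only [List.take_succ_cons, List.take_zero, List.mem_cons, List.not_mem_nil,
        or_false] at hy
      rcases hy with rfl | rfl
      · exact hab
      · exact h a (by simp) y (by simp)
  | @cons a b c l hab hac _ ih =>
    refine cons hab hac (ih fun x hx => h x ?_)
    have : (a :: b :: c :: l).reverse = (b :: c :: l).reverse ++ [a] := List.reverse_cons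
    rwa [this, List.take_append_of_le_length (by simp)]

theorem of_pairwise {l : List α} (h : l.Pairwise R) : SquareChain R l := by
  induction l with
  | nil => exact nil
  | cons a l ih =>
    rw [List.pairwise_cons] at h
    exact (ih h.2).cons_of_forall_take_two fun y hy => h.1 y (List.mem_of_mem_take hy)

theorem pairwise_append {l₁ l₂ : List α} (h₁ : l₁.Pairwise R) (h₂ : SquareChain R l₂)
    (h : ∀ x ∈ l₁, ∀ y ∈ l₂, R x y) : SquareChain R (l₁ ++ l₂) := by
  induction l₁ with
  | nil => exact h₂
  | cons a l₁ ih =>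
    rw [List.pairwise_cons] at h₁
    refine (ih h₁.2 fun x hx => h x (by simp [hx])).cons_of_forall_take_two fun y hy => ?_
    rcases List.mem_append.mp (List.mem_of_mem_take hy) with hy | hy
    · exact h₁.1 y hy
    · exact h a (by simp) y hy

theorem rel_getElem {l : List α} (h : SquareChain R l) {i j : ℕ} (hj : j < l.length)
    (hij : j = i + 1 ∨ j = i + 2) : R l[i] l[j] := by
  induction h generalizing i j with
  | nil => simp at hj
  | singleton a => simp at hj; omega
  | @pair a b hab =>
    obtain ⟨rfl, rfl⟩ : i = 0 ∧ j = 1 := by simp at hj; omega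
    exact hab
  | @cons a b c l hab hac _ ih =>
    match i, j, hij with
    | 0, 1, _ => exact hab
    | 0, 2, _ => exact hac
    | i + 1, j + 1, hij => exact ih (by simp at hj ⊢; omega) (by omega)

end SquareChain

def interleaveBlocks {α : Type*} : List (List α) → List α → List α
  | [], hubs => hubs
  | bl :: bls, hubs => hubs.take 2 ++ (bl ++ interleaveBlocks bls (hubs.drop 2))

section interleaveBlocks

variable {α : Type*}

theorem length_interleaveBlocks (bls : List (List α)) (hubs : List α) :
    (interleaveBlocks bls hubs).length = bls.flatten.length + hubs.length := by
  induction bls generalizing hubs with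
  | nil => simp [interleaveBlocks]
  | cons bl bls ih =>
    simp only [interleaveBlocks, List.length_append, ih, List.flatten_cons, List.length_take,
      List.length_drop]
    omega

theorem mem_interleaveBlocks {x : α} {bls : List (List α)} {hubs : List α} :
    x ∈ interleaveBlocks bls hubs ↔ x ∈ bls.flatten ∨ x ∈ hubs := by
  induction bls generalizing hubs with
  | nil => simp [interleaveBlocks]
  | cons bl bls ih =>
    conv_rhs => rw [← List.take_append_drop 2 hubs]
    simp only [interleaveBlocks, List.mem_append, ih, List.flatten_cons]
    tauto

theorem take_two_interleaveBlocks_subset {bls : List (List α)} {hubs : List α}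
    (h : 2 * bls.length ≤ hubs.length) : (interleaveBlocks bls hubs).take 2 ⊆ hubs := by
  cases bls with
  | nil => exact List.take_subset _ _
  | cons bl bls =>
    rw [interleaveBlocks, List.take_append_of_le_length (by simp at h ⊢; omega),
      List.take_take, min_self]
    exact List.take_subset _ _

theorem SquareChain.interleaveBlocks {R : α → α → Prop} (hR : Std.Symm R)
    {bls : List (List α)} {hubs : List α} (hbls : ∀ bl ∈ bls, SquareChain R bl)
    (hhubs : hubs.Pairwise R) (hrel : ∀ a ∈ hubs, ∀ x ∈ bls.flatten, R a x)
    (hlen : 2 * bls.length ≤ hubs.length) : SquareChain R (interleaveBlocks bls hubs) := by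
  induction bls generalizing hubs with
  | nil => exact .of_pairwise hhubs
  | cons bl bls ih =>
    rw [← List.take_append_drop 2 hubs, List.pairwise_append] at hhubs
    obtain ⟨htake, hdrop, hcross⟩ := hhubs
    have hrest : SquareChain R (_root_.interleaveBlocks bls (hubs.drop 2)) :=
      ih (fun b hb => hbls b (by simp [hb])) hdrop
        (fun a ha x hx => hrel a (List.mem_of_mem_drop ha) x (by simp_all))
        (by simp at hlen ⊢; omega)
    have hmid : SquareChain R (bl ++ _root_.interleaveBlocks bls (hubs.drop 2)) := by
      refine (hbls bl (by simp)).append hrest fun x hx y hy => hR.symm _ _ (hrel y ?_ x ?_)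
      · exact List.mem_of_mem_drop
          (take_two_interleaveBlocks_subset (by simp at hlen ⊢; omega) hy)
      · exact List.mem_flatten_of_mem (by simp) (List.mem_reverse.mp (List.mem_of_mem_take hx))
    refine .pairwise_append htake hmid fun a ha y hy => ?_
    have ha' : a ∈ hubs := List.mem_of_mem_take ha
    rcases List.mem_append.mp hy with hy | hy
    · exact hrel a ha' y (by simp [hy])
    · rcases mem_interleaveBlocks.mp hy with hy | hy
      · exact hrel a ha' y (by simp_all)
      · exact hcross a ha y hy

end interleaveBlocks

namespace SimpleGraph

open Finset

section SquarePath

variable {V : Type*} [Fintype V] (G : SimpleGraph V)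

def HasSquareHamiltonianPath : Prop :=
  ∃ f : Fin (Fintype.card V) ≃ V, ∀ i j : Fin (Fintype.card V),
    (i.val + 1 = j.val ∨ i.val + 2 = j.val) → G.Adj (f i) (f j)

theorem hasSquareHamiltonianPath_of_squareChain {L : List V} (hL : SquareChain G.Adj L)
    (hmem : ∀ v, v ∈ L) (hlen : L.length = Fintype.card V) : G.HasSquareHamiltonianPath := by
  let f : Fin (Fintype.card V) → V := fun i => L[i.val]
  have hf : f.Bijective := by
    refine (Fintype.bijective_iff_surjective_and_card f).mpr ⟨fun v => ?_, by simp⟩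
    obtain ⟨i, hi, rfl⟩ := List.getElem_of_mem (hmem v)
    exact ⟨⟨i, hlen ▸ hi⟩, rfl⟩
  exact ⟨.ofBijective f hf, fun i j hij => hL.rel_getElem (by omega) (by omega)⟩

theorem hasSquareHamiltonianPath_of_forall_adj (h : ∀ u v, u ≠ v → G.Adj u v) :
    G.HasSquareHamiltonianPath :=
  G.hasSquareHamiltonianPath_of_squareChain (L := (univ : Finset V).toList)
    (.of_pairwise ((nodup_toList _).pairwise_of_forall_ne fun u _ v _ => h u v))
    (by simp) (by simp)

end SquarePath

variable {V : Type*} [Fintype V] [DecidableEq V] {G : SimpleGraph V} [DecidableRel G.Adj]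
  {S : Finset V}

theorem card_compl_neighborFinset_add_degree (w : V) :
    #(Gᶜ.neighborFinset w) + G.degree w + 1 = Fintype.card V := by
  rw [card_neighborFinset_eq_degree, degree_compl]
  have := G.degree_lt_card_verts w
  omega

theorem degree_add_two_le_of_not_adj {u v : V} (huv : u ≠ v) (h : ¬G.Adj u v) :
    G.degree u + 2 ≤ Fintype.card V := by
  have hv : v ∈ Gᶜ.neighborFinset u := by simp [huv, h]
  have := card_pos.mpr ⟨v, hv⟩
  have := card_compl_neighborFinset_add_degree (G := G) u
  omega

theorem adj_of_card_le_degree_add_two {a w x : V} (haw : a ≠ w) (h : ¬G.Adj a w)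
    (hdeg : Fintype.card V ≤ G.degree a + 2) (hxa : x ≠ a) (hxw : x ≠ w) : G.Adj a x := by
  by_contra hx
  have : 1 < #(Gᶜ.neighborFinset a) :=
    one_lt_card.mpr ⟨w, by simp [haw, h], x, by simp [hxa.symm, hx], hxw.symm⟩
  have := card_compl_neighborFinset_add_degree (G := G) a
  omega

variable (G) in
def NonNeighborsAlmostUniversal (w : V) : Prop :=
  ∀ a ∈ Gᶜ.neighborFinset w, ∀ x, x ≠ a → x ≠ w → G.Adj a x

theorem degree_eq_of_adj {w b : V}
    (hhub : G.NonNeighborsAlmostUniversal w) (hb : G.Adj w b) :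
    G.degree b =
      #(G.neighborFinset w ∩ G.neighborFinset b) + #(Gᶜ.neighborFinset w) + 1 := by
  have hout : G.neighborFinset b \ G.neighborFinset w = insert w (Gᶜ.neighborFinset w) := by
    ext x
    simp only [mem_sdiff, mem_neighborFinset, mem_insert, compl_adj]
    constructor
    · rintro ⟨hbx, hwx⟩
      by_cases hxw : x = w
      · exact .inl hxw
      · exact .inr ⟨Ne.symm hxw, hwx⟩
    · rintro (rfl | ⟨hwx, hnwx⟩)
      · exact ⟨hb.symm, G.loopless.irrefl x⟩
      · refine ⟨(hhub x (by simp [hwx, hnwx]) b ?_ hb.ne').symm, hnwx⟩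
        rintro rfl
        exact hnwx hb
  rw [← card_neighborFinset_eq_degree, ← card_inter_add_card_sdiff _ (G.neighborFinset w),
    hout, card_insert_of_notMem (by simp), inter_comm]
  omega

variable (G) in
def FourPathFree (S : Finset V) : Prop :=
  ¬∃ a b c d, a ∈ S ∧ b ∈ S ∧ c ∈ S ∧ d ∈ S ∧ a ≠ c ∧ a ≠ d ∧ b ≠ d ∧
    G.Adj a b ∧ G.Adj b c ∧ G.Adj c d

variable (G) in
def OreOn (S : Finset V) (k : ℕ) : Prop :=
  ∀ x ∈ S, ∀ y ∈ S, x ≠ y → ¬G.Adj x y →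
    k ≤ #(S ∩ G.neighborFinset x) + #(S ∩ G.neighborFinset y)

variable (G) in
def closedNbhdIn (S : Finset V) (b : V) : Finset V := insert b (S ∩ G.neighborFinset b)

theorem mem_closedNbhdIn {b x : V} :
    x ∈ G.closedNbhdIn S b ↔ x = b ∨ x ∈ S ∧ G.Adj b x := by
  simp [closedNbhdIn]

theorem self_mem_closedNbhdIn (b : V) : b ∈ G.closedNbhdIn S b := mem_insert_self _ _

theorem closedNbhdIn_subset {b : V} (hb : b ∈ S) : G.closedNbhdIn S b ⊆ S :=
  insert_subset hb inter_subset_left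

theorem card_closedNbhdIn (b : V) :
    #(G.closedNbhdIn S b) = #(S ∩ G.neighborFinset b) + 1 :=
  card_insert_of_notMem (by simp)

theorem FourPathFree.adj_trans (hP : G.FourPathFree S)
    (hS : G.OreOn S 3)
    {x y z : V} (hx : x ∈ S) (hy : y ∈ S) (hz : z ∈ S) (hxy : G.Adj x y) (hyz : G.Adj y z)
    (hxz : x ≠ z) : G.Adj x z := by
  by_contra hnxz
  have hsum := hS x hx z hz hxz hnxz
  rcases (by omega : 1 < #(S ∩ G.neighborFinset x) ∨ 1 < #(S ∩ G.neighborFinset z))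
    with h | h
  · obtain ⟨d, hd, hdy⟩ := exists_mem_ne h y
    rw [mem_inter, mem_neighborFinset] at hd
    have hdz : d ≠ z := by rintro rfl; exact hnxz hd.2
    exact hP ⟨d, x, y, z, hd.1, hx, hy, hz, hdy, hdz, hxz, hd.2.symm, hxy, hyz⟩
  · obtain ⟨d, hd, hdy⟩ := exists_mem_ne h y
    rw [mem_inter, mem_neighborFinset] at hd
    have hxd : x ≠ d := by rintro rfl; exact hnxz hd.2.symm
    exact hP ⟨x, y, z, d, hx, hy, hz, hd.1, hxz, hxd, hdy.symm, hxy, hyz, hd.2⟩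

theorem FourPathFree.isClique_closedNbhdIn (hP : G.FourPathFree S)
    (hS : G.OreOn S 3)
    {b : V} (hb : b ∈ S) : G.IsClique (G.closedNbhdIn S b : Set V) := by
  intro x hx y hy hxy
  rw [mem_coe, mem_closedNbhdIn] at hx hy
  rcases hx with rfl | ⟨hxS, hbx⟩ <;> rcases hy with rfl | ⟨hyS, hby⟩
  · exact absurd rfl hxy
  · exact hby
  · exact hbx.symm
  · exact hP.adj_trans hS hxS hb hyS hbx.symm hby hxy

theorem FourPathFree.closedNbhdIn_eq_of_mem (hP : G.FourPathFree S)
    (hS : G.OreOn S 3)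
    {b x : V} (hb : b ∈ S) (hx : x ∈ G.closedNbhdIn S b) :
    G.closedNbhdIn S x = G.closedNbhdIn S b := by
  rcases mem_closedNbhdIn.mp hx with rfl | ⟨hxS, hbx⟩
  · rfl
  refine Subset.antisymm (fun t ht => ?_) (fun t ht => ?_)
  · rcases mem_closedNbhdIn.mp ht with rfl | ⟨htS, hxt⟩
    · exact hx
    by_cases htb : t = b
    · exact htb ▸ self_mem_closedNbhdIn t
    exact mem_closedNbhdIn.mpr (.inr ⟨htS, hP.adj_trans hS hb hxS htS hbx hxt (Ne.symm htb)⟩)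
  · by_cases htx : t = x
    · exact htx ▸ self_mem_closedNbhdIn t
    refine mem_closedNbhdIn.mpr (.inr ⟨closedNbhdIn_subset hb ht, ?_⟩)
    exact hP.isClique_closedNbhdIn hS hb hx ht (Ne.symm htx)

theorem FourPathFree.card_inter_neighborFinset_le_two (hP : G.FourPathFree S)
    (hS : G.OreOn S 3)
    {b : V} (hb : b ∈ S) : #(S ∩ G.neighborFinset b) ≤ 2 := by
  by_contra! h
  obtain ⟨x, hx, y, hy, z, hz, hxy, hxz, hyz⟩ := two_lt_card.mp h
  simp only [mem_inter, mem_neighborFinset] at hx hy hz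
  exact hP ⟨x, b, y, z, hx.1, hb, hy.1, hz.1, hxy, hxz, hz.2.ne, hx.2.symm, hy.2,
    hP.adj_trans hS hy.1 hb hz.1 hy.2.symm hz.2 hyz⟩

theorem FourPathFree.one_le_card_inter_neighborFinset (hP : G.FourPathFree S)
    (hS : G.OreOn S 3)
    (hS₂ : 1 < #S) {b : V} (hb : b ∈ S) : 1 ≤ #(S ∩ G.neighborFinset b) := by
  by_contra! h
  obtain ⟨b', hb', hne⟩ := exists_mem_ne hS₂ b
  have hnadj : ¬G.Adj b b' := fun hbb' =>
    absurd (card_pos.mpr ⟨b', mem_inter.mpr ⟨hb', (G.mem_neighborFinset b b').mpr hbb'⟩⟩)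
      (by omega)
  have := hS b hb b' hb' hne.symm hnadj
  have := hP.card_inter_neighborFinset_le_two hS hb'
  omega

theorem FourPathFree.eq_of_card_closedNbhdIn_eq_two (hP : G.FourPathFree S)
    (hS : G.OreOn S 3) {b b' : V} (hb : b ∈ S) (hb' : b' ∈ S)
    (hc : #(G.closedNbhdIn S b) = 2) (hc' : #(G.closedNbhdIn S b') = 2) :
    G.closedNbhdIn S b = G.closedNbhdIn S b' := by
  by_contra hne
  have hbb' : b ≠ b' := by rintro rfl; exact hne rfl
  have hnadj : ¬G.Adj b b' := fun h =>
    hne (hP.closedNbhdIn_eq_of_mem hS hb (mem_closedNbhdIn.mpr (.inr ⟨hb', h⟩))).symm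
  have := hS b hb b' hb' hbb' hnadj
  rw [card_closedNbhdIn] at hc hc'
  omega

theorem FourPathFree.sum_card_image_closedNbhdIn (hP : G.FourPathFree S) (hS : G.OreOn S 3) :
    ∑ c ∈ S.image (G.closedNbhdIn S), #c = #S := by
  rw [card_eq_sum_card_image (G.closedNbhdIn S) S]
  refine sum_congr rfl fun c hc => ?_
  obtain ⟨b, hb, rfl⟩ := mem_image.mp hc
  refine congrArg card (ext fun x => ?_)
  rw [mem_filter]
  constructor
  · intro hx
    exact ⟨closedNbhdIn_subset hb hx, hP.closedNbhdIn_eq_of_mem hS hb hx⟩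
  · rintro ⟨-, hx⟩
    exact hx ▸ self_mem_closedNbhdIn x

theorem FourPathFree.three_mul_card_image_closedNbhdIn_le (hP : G.FourPathFree S)
    (hS : G.OreOn S 3) (hS₂ : 1 < #S) : 3 * #(S.image (G.closedNbhdIn S)) ≤ #S + 1 := by
  set C := S.image (G.closedNbhdIn S)
  have hsize : ∀ c ∈ C, 2 ≤ #c ∧ #c ≤ 3 := by
    intro c hc
    obtain ⟨b, hb, rfl⟩ := mem_image.mp hc
    have := hP.card_inter_neighborFinset_le_two hS hb
    have := hP.one_le_card_inter_neighborFinset hS hS₂ hb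
    rw [card_closedNbhdIn]
    omega
  have hpairs : #{c ∈ C | #c = 2} ≤ 1 := by
    refine card_le_one.mpr fun c hc c' hc' => ?_
    obtain ⟨hc, hc2⟩ := mem_filter.mp hc
    obtain ⟨hc', hc'2⟩ := mem_filter.mp hc'
    obtain ⟨b, hb, rfl⟩ := mem_image.mp hc
    obtain ⟨b', hb', rfl⟩ := mem_image.mp hc'
    exact hP.eq_of_card_closedNbhdIn_eq_two hS hb hb' hc2 hc'2
  calc 3 * #C = ∑ c ∈ C, 3 := by rw [sum_const, smul_eq_mul, mul_comm]
    _ ≤ ∑ c ∈ C, (#c + if #c = 2 then 1 else 0) :=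
        sum_le_sum fun c hc => by have := hsize c hc; split_ifs <;> omega
    _ = #S + #{c ∈ C | #c = 2} := by
        rw [sum_add_distrib, hP.sum_card_image_closedNbhdIn hS, sum_boole]; rfl
    _ ≤ #S + 1 := by omega

theorem FourPathFree.exists_cliques (hP : G.FourPathFree S) (hS : G.OreOn S 3)
    (hS₂ : 1 < #S) :
    ∃ l : List (Finset V), (∀ c ∈ l, G.IsClique (c : Set V) ∧ 2 ≤ #c ∧ c ⊆ S) ∧
      (∀ v ∈ S, ∃ c ∈ l, v ∈ c) ∧ (l.map card).sum = #S ∧ 3 * l.length ≤ #S + 1 := by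
  refine ⟨(S.image (G.closedNbhdIn S)).toList, fun c hc => ?_, fun v hv => ?_, ?_, ?_⟩
  · obtain ⟨b, hb, rfl⟩ := mem_image.mp (mem_toList.mp hc)
    have := hP.one_le_card_inter_neighborFinset hS hS₂ hb
    exact ⟨hP.isClique_closedNbhdIn hS hb, by rw [card_closedNbhdIn]; omega,
      closedNbhdIn_subset hb⟩
  · exact ⟨_, mem_toList.mpr (mem_image_of_mem _ hv), self_mem_closedNbhdIn v⟩
  · rw [sum_map_toList]
    exact hP.sum_card_image_closedNbhdIn hS
  · rw [length_toList]
    exact hP.three_mul_card_image_closedNbhdIn_le hS hS₂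

theorem hasSquareHamiltonianPath_of_blocks {w : V}
    (hhub : G.NonNeighborsAlmostUniversal w)
    {P : List V} {bls : List (List V)} (hP : SquareChain G.Adj P)
    (hPend : ∀ x ∈ P.reverse.take 2, G.Adj w x) (hbls : ∀ bl ∈ bls, SquareChain G.Adj bl)
    (hblsw : ∀ x ∈ bls.flatten, G.Adj w x) (hwP : w ∈ P)
    (hcover : ∀ v, G.Adj w v → v ∈ P ∨ v ∈ bls.flatten)
    (hlen : P.length + bls.flatten.length = G.degree w + 1)
    (hbudget : 2 * bls.length ≤ #(Gᶜ.neighborFinset w)) : G.HasSquareHamiltonianPath := by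
  have hcard := card_compl_neighborFinset_add_degree (G := G) w
  set A := Gᶜ.neighborFinset w
  have hmemA : ∀ a, a ∈ A ↔ w ≠ a ∧ ¬G.Adj w a := fun a => by simp [A]
  have hhubw : ∀ a ∈ A, ∀ x, G.Adj w x → G.Adj a x := fun a ha x hx =>
    hhub a ha x (by rintro rfl; exact ((hmemA x).mp ha).2 hx) hx.ne'
  have hbudget' : 2 * bls.length ≤ A.toList.length := by simpa using hbudget
  refine G.hasSquareHamiltonianPath_of_squareChain (L := P ++ interleaveBlocks bls A.toList)
    ?_ (fun v => ?_) ?_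
  · refine hP.append (.interleaveBlocks G.symm hbls ?_ ?_ hbudget') fun x hx y hy => ?_
    · refine (nodup_toList A).pairwise_of_forall_ne fun a ha b hb hab => ?_
      exact hhub a (mem_toList.mp ha) b hab.symm ((hmemA b).mp (mem_toList.mp hb)).1.symm
    · exact fun a ha x hx => hhubw a (mem_toList.mp ha) x (hblsw x hx)
    · have hy : y ∈ A := mem_toList.mp (take_two_interleaveBlocks_subset hbudget' hy)
      exact (hhubw y hy x (hPend x hx)).symm
  · rw [List.mem_append, mem_interleaveBlocks]
    by_cases hvw : v = w
    · exact .inl (hvw ▸ hwP)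
    by_cases hadj : G.Adj w v
    · rcases hcover v hadj with h | h
      · exact .inl h
      · exact .inr (.inl h)
    · exact .inr (.inr (mem_toList.mpr ((hmemA v).mpr ⟨Ne.symm hvw, hadj⟩)))
  · rw [List.length_append, length_interleaveBlocks, length_toList]
    omega

theorem hasSquareHamiltonianPath_of_fourPath {w a b c d : V}
    (hhub : G.NonNeighborsAlmostUniversal w)
    (ha : G.Adj w a) (hb : G.Adj w b) (hc : G.Adj w c) (hd : G.Adj w d)
    (hac : a ≠ c) (had : a ≠ d) (hbd : b ≠ d)
    (hab : G.Adj a b) (hbc : G.Adj b c) (hcd : G.Adj c d)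
    (hbudget : 2 * G.degree w ≤ #(Gᶜ.neighborFinset w) + 8) : G.HasSquareHamiltonianPath := by
  set R := G.neighborFinset w \ {a, b, c, d}
  have hpath : ({a, b, c, d} : Finset V) ⊆ G.neighborFinset w := by
    simp [insert_subset_iff, ha, hb, hc, hd]
  have hcard : #({a, b, c, d} : Finset V) = 4 := by
    simp [card_insert_of_notMem, hab.ne, hac, had, hbc.ne, hbd, hcd.ne]
  have hR : #R + 4 = G.degree w := by
    have := card_le_card hpath
    rw [card_sdiff_of_subset hpath, hcard, card_neighborFinset_eq_degree] at *
    omega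
  have hflat : (R.toList.map fun x => [x]).flatten = R.toList := by
    rw [← List.flatMap_def, List.flatMap_singleton']
  refine hasSquareHamiltonianPath_of_blocks hhub (P := [a, b, w, c, d])
    (bls := R.toList.map fun x => [x])
    (.cons hab ha.symm (.cons hb.symm hbc (.cons hc hd (.pair hcd)))) ?_ ?_ ?_ (by simp)
    ?_ ?_ ?_
  · intro x hx
    simp only [List.reverse_cons, List.reverse_nil, List.nil_append, List.cons_append,
      List.take_succ_cons, List.take_zero, List.mem_cons, List.not_mem_nil, or_false] at hx
    rcases hx with rfl | rfl
    · exact hd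
    · exact hc
  · simpa using fun x _ => .singleton x
  · rw [hflat]
    exact fun x hx => (mem_neighborFinset _ _ _).mp (mem_sdiff.mp (mem_toList.mp hx)).1
  · intro v hv
    rw [hflat, mem_toList]
    by_cases hpv : v ∈ ({a, b, c, d} : Finset V)
    · left
      simp only [mem_insert, mem_singleton] at hpv
      simp only [List.mem_cons, List.not_mem_nil, or_false]
      tauto
    · exact .inr (mem_sdiff.mpr ⟨(mem_neighborFinset _ _ _).mpr hv, hpv⟩)
  · rw [hflat, length_toList]
    simp only [List.length_cons, List.length_nil]
    omega
  · rw [List.length_map, length_toList]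
    omega

theorem hasSquareHamiltonianPath_of_fourPathFree {w : V}
    (hhub : G.NonNeighborsAlmostUniversal w)
    (hP : G.FourPathFree (G.neighborFinset w)) (hS : G.OreOn (G.neighborFinset w) 3)
    (hdeg : 1 < G.degree w)
    (hbudget : 2 * ((G.degree w + 1) / 3) ≤ #(Gᶜ.neighborFinset w) + 2) :
    G.HasSquareHamiltonianPath := by
  have hBdeg : #(G.neighborFinset w) = G.degree w := card_neighborFinset_eq_degree _ _
  obtain ⟨_ | ⟨c₁, rest⟩, hcl, hcover, hsum, hcount⟩ := hP.exists_cliques hS (hBdeg ▸ hdeg)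
  · simp only [List.map_nil, List.sum_nil] at hsum
    omega
  have hchain : ∀ c ∈ c₁ :: rest, SquareChain G.Adj c.toList := fun c hc =>
    .of_pairwise ((nodup_toList c).pairwise_of_forall_ne fun x hx y hy hxy =>
      (hcl c hc).1 (mem_toList.mp hx) (mem_toList.mp hy) hxy)
  have hadj : ∀ c ∈ c₁ :: rest, ∀ x ∈ c.toList, G.Adj w x := fun c hc x hx =>
    (mem_neighborFinset _ _ _).mp ((hcl c hc).2.2 (mem_toList.mp hx))
  have hc₁ : c₁ ∈ c₁ :: rest := List.mem_cons_self
  refine hasSquareHamiltonianPath_of_blocks hhub (P := w :: c₁.toList)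
    (bls := rest.map toList)
    ((hchain c₁ hc₁).cons_of_forall_take_two fun y hy =>
      hadj c₁ hc₁ y (List.mem_of_mem_take hy)) ?_ ?_ ?_ (by simp) ?_ ?_ ?_
  · intro x hx
    rw [List.reverse_cons, List.take_append_of_le_length (by simpa using (hcl c₁ hc₁).2.1)]
      at hx
    exact hadj c₁ hc₁ x (List.mem_reverse.mp (List.mem_of_mem_take hx))
  · simp only [List.mem_map]
    rintro _ ⟨c, hc, rfl⟩
    exact hchain c (List.mem_cons_of_mem _ hc)
  · simp only [List.mem_flatten, List.mem_map]
    rintro x ⟨_, ⟨c, hc, rfl⟩, hx⟩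
    exact hadj c (List.mem_cons_of_mem _ hc) x hx
  · intro v hv
    obtain ⟨c, hc, hvc⟩ := hcover v ((mem_neighborFinset _ _ _).mpr hv)
    rcases List.mem_cons.mp hc with rfl | hc
    · exact .inl (List.mem_cons_of_mem _ (mem_toList.mpr hvc))
    · exact .inr (List.mem_flatten.mpr ⟨_, List.mem_map_of_mem hc, mem_toList.mpr hvc⟩)
  · simp only [List.map_cons, List.sum_cons] at hsum
    simp only [List.length_cons, List.length_flatten, List.map_map, Function.comp_def,
      length_toList]
    change _ + 1 + (rest.map card).sum = _
    omega
  · simp only [List.length_cons] at hcount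
    rw [List.length_map]
    omega

theorem hasSquareHamiltonianPath_of_ore_of_degree_le
    (hOre : ∀ u v, u ≠ v → ¬G.Adj u v → 4 * Fintype.card V ≤ 3 * (G.degree u + G.degree v) + 1)
    {w : V} (hw : 3 * G.degree w ≤ Fintype.card V + 6) (hA : (Gᶜ.neighborFinset w).Nonempty) :
    G.HasSquareHamiltonianPath := by
  have hcard := card_compl_neighborFinset_add_degree (G := G) w
  have hmemA : ∀ a, a ∈ Gᶜ.neighborFinset w ↔ w ≠ a ∧ ¬G.Adj w a := fun a => by simp
  have hhub : G.NonNeighborsAlmostUniversal w := by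
    intro a ha x hxa hxw
    obtain ⟨hwa, hnadj⟩ := (hmemA a).mp ha
    have := hOre w a hwa hnadj
    exact adj_of_card_le_degree_add_two hwa.symm (fun h => hnadj h.symm) (by omega) hxa hxw
  have hw' : Fintype.card V + 5 ≤ 3 * G.degree w := by
    obtain ⟨a, ha⟩ := hA
    obtain ⟨hwa, hnadj⟩ := (hmemA a).mp ha
    have := hOre w a hwa hnadj
    have := degree_add_two_le_of_not_adj hwa.symm fun h => hnadj h.symm
    omega
  have hS : G.OreOn (G.neighborFinset w) 3 := by
    intro x hx y hy hxy hnadj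
    have := hOre x y hxy hnadj
    rw [mem_neighborFinset] at hx hy
    rw [degree_eq_of_adj hhub hx, degree_eq_of_adj hhub hy] at this
    omega
  by_cases hP : G.FourPathFree (G.neighborFinset w)
  · exact hasSquareHamiltonianPath_of_fourPathFree hhub hP hS (by omega) (by omega)
  · obtain ⟨a, b, c, d, ha, hb, hc, hd, hac, had, hbd, hab, hbc, hcd⟩ := not_not.mp hP
    simp only [mem_neighborFinset] at ha hb hc hd
    exact hasSquareHamiltonianPath_of_fourPath hhub ha hb hc hd hac had hbd hab hbc hcd
      (by omega)

end SimpleGraph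

open SimpleGraph

theorem stmt15 (V : Type) [Fintype V] [DecidableEq V] (G : SimpleGraph V)
    [DecidableRel G.Adj]
    (hOre : ∀ u v : V, u ≠ v → ¬ G.Adj u v →
      (4 * (Fintype.card V : ℝ) - 1) / 3 ≤ (G.degree u : ℝ) + G.degree v)
    (hδ : (G.minDegree : ℝ) ≤ (Fintype.card V : ℝ) / 3 + 2) :
    ∃ f : Fin (Fintype.card V) ≃ V, ∀ i j : Fin (Fintype.card V),
      (i.val + 1 = j.val ∨ i.val + 2 = j.val) → G.Adj (f i) (f j) := by
  by_cases hcomplete : ∀ u v, u ≠ v → G.Adj u v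
  · exact G.hasSquareHamiltonianPath_of_forall_adj hcomplete
  push Not at hcomplete
  obtain ⟨u, v, huv, hnadj⟩ := hcomplete
  have : Nonempty V := ⟨u⟩
  obtain ⟨w, hw⟩ := G.exists_minimal_degree_vertex
  have hOre' : ∀ u v, u ≠ v → ¬G.Adj u v →
      4 * Fintype.card V ≤ 3 * (G.degree u + G.degree v) + 1 := by
    intro u v huv hnadj
    have := hOre u v huv hnadj
    have : (4 * Fintype.card V : ℝ) ≤ 3 * (G.degree u + G.degree v) + 1 := by linarith
    exact_mod_cast this
  have hwδ : 3 * G.degree w ≤ Fintype.card V + 6 := by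
    have : (3 * G.minDegree : ℝ) ≤ Fintype.card V + 6 := by linarith
    rw [← hw]
    exact_mod_cast this
  have hA : (Gᶜ.neighborFinset w).Nonempty := by
    have := degree_add_two_le_of_not_adj huv hnadj
    have := G.minDegree_le_degree u
    have := card_compl_neighborFinset_add_degree (G := G) w
    rw [← Finset.card_pos]
    omega
  exact hasSquareHamiltonianPath_of_ore_of_degree_le hOre' hwδ hA
end
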